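/- arXiv:2202.11788 — 4 statements merged into one kernel-verified Lean document; each statement's English description precedes it below -/
import Mathlib

section
/- Let A ∈ ℝ^{m×n} with rank(A) = n ≤ m, and let ΔA ∈ ℝ^{m×n} be a perturbation with ‖A⁺‖·‖ΔA‖ < 1, where A⁺ = (AᵀA)⁻¹Aᵀ. Then rank(A+ΔA) = n. Moreover, let B ∈ ℝ^{m×ℓ_1×ℓ_2} and ΔB ∈ ℝ^{m×ℓ_1×ℓ_2}, and let X ∈ ℝ^{n×ℓ_1×ℓ_2} and X+ΔX ∈ ℝ^{n×ℓ_1×ℓ_2} be the least-squares solutions of the tensor equations A∘X = B and (A+ΔA)∘X = B+ΔB respectively (i.e., for each (i_1,i_2), X(·,i_1,i_2) = A⁺B(·,i_1,i_2) and (X+ΔX)(·,i_1,i_2) = (A+ΔA)⁺(B+ΔB)(·,i_1,i_2)). If for every (i_1,i_2) the vector B(·,i_1,i_2) lies in the column space of A, then |||ΔX||| ≤ (√(2 m ℓ_2)·‖A⁺‖)/(1 − ‖A⁺‖·‖ΔA‖) · (‖ΔA‖·|||X||| + ‖ΔB‖_∞). In particular, if |||X||| ≥ χ > 0 for some constant χ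 and ‖A⁺‖·‖ΔA‖ ≤ 1/2, then |||ΔX|||/|||X||| ≤ √(8 m ℓ_2)·‖A⁺‖·(‖ΔA‖ + ‖ΔB‖_∞·χ⁻¹). -/
open scoped BigOperators
open Matrix

/-- Indices `(x_0, …, x_{k-1})` of the first `k` variables (sizes given by `n`). -/
abbrev PreIdx (n : ℕ → ℕ) (k : ℕ) := ∀ i : Fin k, Fin (n i)

/-- Indices `(x_k, …, x_{d-1})` of the variables with position `≥ k`. -/
abbrev SufIdx (n : ℕ → ℕ) (d k : ℕ) := ∀ i : {i : Fin d // k ≤ (i : ℕ)}, Fin (n i)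

/-- Indices of the variables with position in the window `[a, b)`. -/
abbrev MidIdx (n : ℕ → ℕ) (d a b : ℕ) :=
  ∀ i : {i : Fin d // a ≤ (i : ℕ) ∧ (i : ℕ) < b}, Fin (n i)

/-- Glue a prefix index and a suffix index into a full index. -/
def glue {n : ℕ → ℕ} {d k : ℕ} (x : PreIdx n k) (y : SufIdx n d k) : PreIdx n d :=
  fun i => if h : (i : ℕ) < k then x ⟨i, h⟩ else y ⟨i, Nat.le_of_not_lt h⟩

/-- The `k`-th unfolding matrix of a `d`-dimensional tensor `p`. -/
def unfold {n : ℕ → ℕ} {d : ℕ} (p : PreIdx n d → ℝ) (k : ℕ) :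
    Matrix (PreIdx n k) (SufIdx n d k) ℝ :=
  Matrix.of fun x y => p (glue x y)

/-- Column space of a matrix: span of its columns. -/
noncomputable def colSpace {R C : Type*} (M : Matrix R C ℝ) : Submodule ℝ (R → ℝ) :=
  Submodule.span ℝ (Set.range fun c => fun r => M r c)

/-- Row space of a matrix: span of its rows. -/
noncomputable def rowSpace {R C : Type*} (M : Matrix R C ℝ) : Submodule ℝ (C → ℝ) :=
  Submodule.span ℝ (Set.range fun r => fun c => M r c)

/-- Rank of a matrix (dimension of its column space). -/
noncomputable def mrank {R C : Type*} (M : Matrix R C ℝ) : ℕ :=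
  Module.finrank ℝ ↥(colSpace M)

/-- Restriction of a prefix index to the first `k` variables. -/
def takePre {n : ℕ → ℕ} {k : ℕ} (x : PreIdx n (k + 1)) : PreIdx n k :=
  fun i => x ⟨i, Nat.lt_succ_of_lt i.isLt⟩

/-- Extend a prefix index by one more variable. -/
def snoc' {n : ℕ → ℕ} {k : ℕ} (z : PreIdx n k) (a : Fin (n k)) : PreIdx n (k + 1) :=
  fun i =>
    if h : (i : ℕ) < k then z ⟨i, h⟩
    else Fin.cast (congrArg n (by have := i.isLt; omega : k = (i : ℕ))) a

/-- A family of tensor-train cores: core `k` has shape `r k × n k × r (k+1)`.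
(The first and last cores carry a dummy index of size `r 0 = 1`, `r d = 1`.) -/
abbrev CoreType (n r : ℕ → ℕ) (d : ℕ) :=
  ∀ k : Fin d, Fin (r k) → Fin (n k) → Fin (r ((k : ℕ) + 1)) → ℝ

/-- Partial contraction of the first `k` cores. -/
noncomputable def ttPrefixF {d : ℕ} {n r : ℕ → ℕ} (G : CoreType n r d) :
    (k : ℕ) → k ≤ d → PreIdx n k → Fin (r 0) → Fin (r k) → ℝ
  | 0, _, _, a, b => if (a : ℕ) = (b : ℕ) then 1 else 0
  | k + 1, h, x, a, b =>
      ∑ c : Fin (r k),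
        ttPrefixF G k (Nat.le_of_succ_le h) (takePre x) a c * G ⟨k, h⟩ c (x (Fin.last k)) b

/-- Full contraction `G_1 ∘ ⋯ ∘ G_d` of a family of tensor-train cores. -/
noncomputable def ttContract {d : ℕ} {n r : ℕ → ℕ} (G : CoreType n r d)
    (x : PreIdx n d) : ℝ :=
  ∑ a : Fin (r 0), ∑ b : Fin (r d), ttPrefixF G d le_rfl x a b

/-- The recursively contracted left sketch functions `S_k` built from blocks `s_k`. -/
noncomputable def leftSketch {n m : ℕ → ℕ}
    (s : ∀ k : ℕ, Fin (m (k + 1)) → Fin (n k) → Fin (m k) → ℝ) :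
    (k : ℕ) → Fin (m k) → PreIdx n k → ℝ
  | 0, _, _ => 1
  | k + 1, β, x => ∑ c : Fin (m k), s k β (x (Fin.last k)) c * leftSketch s k c (takePre x)

/-- The right-sketched unfolding `Φ̄_k = p ∘ T_{k+1}`. -/
noncomputable def rightSketched {n : ℕ → ℕ} {d : ℕ} (p : PreIdx n d → ℝ)
    {ℓ : ℕ → ℕ} (T : ∀ k : ℕ, SufIdx n d k → Fin (ℓ k) → ℝ) (k : ℕ)
    (x : PreIdx n k) (γ : Fin (ℓ k)) : ℝ :=
  ∑ y : SufIdx n d k, p (glue x y) * T k y γ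

/-- The doubly sketched tensor `Φ̃_{j+1} = S_j ∘ Φ̄_{j+1}`. -/
noncomputable def tildePhi {n : ℕ → ℕ} {d : ℕ} {ℓ m : ℕ → ℕ} (p : PreIdx n d → ℝ)
    (T : ∀ k : ℕ, SufIdx n d k → Fin (ℓ k) → ℝ)
    (s : ∀ k : ℕ, Fin (m (k + 1)) → Fin (n k) → Fin (m k) → ℝ)
    (j : ℕ) (β : Fin (m j)) (xj : Fin (n j)) (γ : Fin (ℓ (j + 1))) : ℝ :=
  ∑ z : PreIdx n j, leftSketch s j β z * rightSketched p T (j + 1) (snoc' z xj) γ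

/-- Marginal of `p` on the window of variables `[a, b)`. -/
noncomputable def winMarg {n : ℕ → ℕ} {d : ℕ} (p : PreIdx n d → ℝ) (a b : ℕ)
    (y : MidIdx n d a b) : ℝ :=
  ∑ z : ∀ i : {i : Fin d // (i : ℕ) < a ∨ b ≤ (i : ℕ)}, Fin (n i),
    p fun i =>
      if h : a ≤ (i : ℕ) ∧ (i : ℕ) < b then y ⟨i, h⟩ else z ⟨i, by omega⟩

/-- Marginal of `p` on the window `[a, b)`, viewed as a matrix with rows indexed by
variables in `[a, c)` and columns by variables in `[c, b)`. -/
noncomputable def winMatrix {n : ℕ → ℕ} {d : ℕ} (p : PreIdx n d → ℝ) (a c b : ℕ) :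
    Matrix (MidIdx n d a c) (MidIdx n d c b) ℝ :=
  Matrix.of fun x y =>
    ∑ z : ∀ i : {i : Fin d // (i : ℕ) < a ∨ b ≤ (i : ℕ)}, Fin (n i),
      p fun i =>
        if h1 : a ≤ (i : ℕ) ∧ (i : ℕ) < c then x ⟨i, h1⟩
        else if h2 : c ≤ (i : ℕ) ∧ (i : ℕ) < b then y ⟨i, h2⟩
        else z ⟨i, by omega⟩

/-- A (first-order) discrete Markov model: a probability density such that for all
`2 ≤ k ≤ d - 1` (1-based), `p(x) · p_k(x_k) = p_{1:k}(x_{1:k}) · p_{k:d}(x_{k:d})`. -/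
def IsMarkov {n : ℕ → ℕ} {d : ℕ} (p : PreIdx n d → ℝ) : Prop :=
  (∀ x, 0 ≤ p x) ∧ (∑ x : PreIdx n d, p x) = 1 ∧
    ∀ k : ℕ, 2 ≤ k → k ≤ d - 1 → ∀ x : PreIdx n d,
      p x * winMarg p (k - 1) k (fun i => x i.1) =
        winMarg p 0 k (fun i => x i.1) * winMarg p (k - 1) d (fun i => x i.1)

/-- An order-`m` discrete Markov model. -/
def IsMarkovOrder {n : ℕ → ℕ} {d : ℕ} (m : ℕ) (p : PreIdx n d → ℝ) : Prop :=
  (∀ x, 0 ≤ p x) ∧ (∑ x : PreIdx n d, p x) = 1 ∧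
    ∀ k : ℕ, m + 1 ≤ k → k ≤ d - 1 → ∀ x : PreIdx n d,
      p x * winMarg p (k - m) k (fun i => x i.1) =
        winMarg p 0 k (fun i => x i.1) * winMarg p (k - m) d (fun i => x i.1)

/-- Spectral norm (ℓ² → ℓ² operator norm) of a matrix. -/
noncomputable def specNorm {R C : Type*} [Fintype R] [Fintype C] [DecidableEq C]
    (M : Matrix R C ℝ) : ℝ :=
  ‖LinearMap.toContinuousLinearMap (Matrix.toEuclideanLin M)‖

/-- Moore–Penrose pseudoinverse of a full-column-rank matrix, `A⁺ = (AᵀA)⁻¹Aᵀ`. -/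
noncomputable def pinv {m n : ℕ} (A : Matrix (Fin m) (Fin n) ℝ) :
    Matrix (Fin n) (Fin m) ℝ :=
  (Aᵀ * A)⁻¹ * Aᵀ

/-- The norm `|||G|||`: max over the middle index of the spectral norm of the slices. -/
noncomputable def tnorm {a b c : ℕ} (G : Fin a → Fin b → Fin c → ℝ) : ℝ :=
  ⨆ i : Fin b, specNorm (Matrix.of fun x y => G x i y)

/-- Supremum norm of a 3-tensor. -/
noncomputable def supNorm3 {a b c : ℕ} (G : Fin a → Fin b → Fin c → ℝ) : ℝ :=
  ⨆ q : Fin a × Fin b × Fin c, |G q.1 q.2.1 q.2.2|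

/-- Supremum norm of a `d`-dimensional tensor. -/
noncomputable def supNormF {n : ℕ → ℕ} {d : ℕ} (f : PreIdx n d → ℝ) : ℝ :=
  ⨆ x : PreIdx n d, |f x|

/-! Fiberwise, write `Ã = A + ΔA` and `P = Ã Ã⁺`, the orthogonal projection onto the range of
`Ã`. Since `b = A x`, `b + Δb = Ã x + (Δb - ΔA x)`, so `Ã Δx = P (Δb - ΔA x)`; applying `A⁺`
gives `Δx = A⁺ P (Δb - ΔA x) - A⁺ ΔA Δx`, whence
`(1 - ‖A⁺‖ ‖ΔA‖) ‖Δx‖ ≤ ‖A⁺‖ (‖ΔA‖ ‖x‖ + ‖Δb‖)`. The same absorption argument applied to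
`v = -A⁺ ΔA v` shows that `Ã` is injective. Finally, a slice with `ℓ₂` columns has spectral norm
at most `√ℓ₂` times its largest column norm, and a fiber of `ΔB` has norm at most `√m ‖ΔB‖_∞`. -/

open WithLp
open scoped Matrix.Norms.L2Operator

section EuclideanNorms

variable {𝕜 : Type*} [RCLike 𝕜] {m n : Type*} [Fintype m] [Fintype n]

lemma norm_toLp_le_sqrt_card_mul_norm (v : n → 𝕜) :
    ‖toLp 2 v‖ ≤ √(Fintype.card n) * ‖v‖ := by
  rw [EuclideanSpace.norm_eq, ← Real.sqrt_sq (norm_nonneg v), ← Real.sqrt_mul (by positivity)]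
  gcongr
  calc ∑ i, ‖toLp 2 v i‖ ^ 2 ≤ ∑ _i : n, ‖v‖ ^ 2 := by
        gcongr with i; exact norm_le_pi_norm v i
    _ = _ := by simp

lemma sum_norm_le_sqrt_card_mul_norm (v : EuclideanSpace 𝕜 n) :
    ∑ j, ‖v j‖ ≤ √(Fintype.card n) * ‖v‖ := by
  rw [EuclideanSpace.norm_eq, ← Real.sqrt_mul (by positivity)]
  apply Real.le_sqrt_of_sq_le
  simpa using sq_sum_le_card_mul_sum_sq (s := Finset.univ) (f := fun j => ‖v j‖)

variable [DecidableEq n]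

lemma specNorm_eq_l2_opNorm (M : Matrix m n ℝ) : specNorm M = ‖M‖ := rfl

lemma Matrix.norm_toLp_mulVec_le (M : Matrix m n 𝕜) (v : n → 𝕜) :
    ‖toLp 2 (M *ᵥ v)‖ ≤ ‖M‖ * ‖toLp 2 v‖ :=
  M.l2_opNorm_mulVec (toLp 2 v)

lemma Matrix.norm_toLp_col_le (M : Matrix m n 𝕜) (j : n) : ‖toLp 2 (M.col j)‖ ≤ ‖M‖ := by
  simpa [Matrix.mulVec_single] using M.norm_toLp_mulVec_le (Pi.single j 1)

lemma Matrix.l2_opNorm_le_sqrt_card_mul {M : Matrix m n 𝕜} {c : ℝ}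
    (hcol : ∀ j, ‖toLp 2 (M.col j)‖ ≤ c) : ‖M‖ ≤ √(Fintype.card n) * c := by
  rcases isEmpty_or_nonempty n with hn | ⟨⟨j⟩⟩
  · simp [Subsingleton.elim M 0]
  have hc : 0 ≤ c := (norm_nonneg _).trans (hcol j)
  rw [l2_opNorm_def]
  refine ContinuousLinearMap.opNorm_le_bound _ (by positivity) fun v => ?_
  have hcols : M *ᵥ ofLp v = ∑ j, v j • M.col j := by
    ext i; simp [Matrix.mulVec, dotProduct, mul_comm]
  calc ‖toLp 2 (M *ᵥ ofLp v)‖ = ‖∑ j, v j • toLp 2 (M.col j)‖ := by simp [hcols]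
    _ ≤ ∑ j, ‖v j‖ * c := by
        refine (norm_sum_le _ _).trans (Finset.sum_le_sum fun j _ => ?_)
        rw [norm_smul]; gcongr; exact hcol j
    _ = c * ∑ j, ‖v j‖ := by rw [Finset.mul_sum]; simp [mul_comm]
    _ ≤ c * (√(Fintype.card n) * ‖v‖) := by gcongr; exact sum_norm_le_sqrt_card_mul_norm v
    _ = _ := by ring

end EuclideanNorms

lemma Matrix.rank_eq_card_iff_injective_mulVec {K m n : Type*} [Field K] [Fintype m]
    [Fintype n] (A : Matrix m n K) : A.rank = Fintype.card n ↔ Function.Injective A.mulVec := by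
  rw [mulVec_injective_iff, linearIndependent_iff_card_eq_finrank_span, rank_eq_finrank_span_cols,
    eq_comm]
  rfl

section Perturbation

variable {𝕜 : Type*} [RCLike 𝕜] {m n : Type*} [Fintype m] [Fintype n] [DecidableEq m]
  [DecidableEq n] {L L' : Matrix n m 𝕜} {A ΔA : Matrix m n 𝕜}

lemma injective_mulVec_add_of_norm_mul_lt_one (hL : L * A = 1) (h : ‖L‖ * ‖ΔA‖ < 1) :
    Function.Injective (A + ΔA).mulVec := by
  rw [← Matrix.coe_mulVecLin, ← LinearMap.ker_eq_bot, Matrix.ker_mulVecLin_eq_bot_iff]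
  intro v hv
  have hv' : v = -((L * ΔA) *ᵥ v) := by
    have := congrArg (L *ᵥ ·) hv
    rw [Matrix.mulVec_mulVec, Matrix.mul_add, hL, Matrix.add_mulVec, Matrix.one_mulVec,
      Matrix.mulVec_zero] at this
    exact eq_neg_of_add_eq_zero_left this
  have hle : ‖toLp 2 v‖ ≤ ‖L‖ * ‖ΔA‖ * ‖toLp 2 v‖ := calc
    ‖toLp 2 v‖ = ‖toLp 2 ((L * ΔA) *ᵥ v)‖ := by rw [hv', toLp_neg, norm_neg, ← hv']
    _ ≤ ‖L * ΔA‖ * ‖toLp 2 v‖ := Matrix.norm_toLp_mulVec_le _ _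
    _ ≤ ‖L‖ * ‖ΔA‖ * ‖toLp 2 v‖ := by gcongr; exact Matrix.l2_opNorm_mul _ _
  have : ‖toLp 2 v‖ = 0 := by nlinarith [norm_nonneg (toLp 2 v)]
  simpa using this

lemma one_sub_mul_norm_toLp_le_of_leftInverse (hL : L * A = 1) (hL' : L' * (A + ΔA) = 1)
    (hP : ‖(A + ΔA) * L'‖ ≤ 1) {x Δx : n → 𝕜} {b Δb : m → 𝕜} (hx : A *ᵥ x = b)
    (hx' : x + Δx = L' *ᵥ (b + Δb)) :
    (1 - ‖L‖ * ‖ΔA‖) * ‖toLp 2 Δx‖ ≤ ‖L‖ * (‖ΔA‖ * ‖toLp 2 x‖ + ‖toLp 2 Δb‖) := by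
  set P := (A + ΔA) * L'
  set r := Δb - ΔA *ᵥ x
  have hPA : P * (A + ΔA) = A + ΔA := by rw [Matrix.mul_assoc, hL', Matrix.mul_one]
  have hperturbed : (A + ΔA) *ᵥ Δx = P *ᵥ r := by
    have hb : b + Δb = (A + ΔA) *ᵥ x + r := by simp only [r, Matrix.add_mulVec, hx]; abel
    have h : (A + ΔA) *ᵥ x + (A + ΔA) *ᵥ Δx = (A + ΔA) *ᵥ x + P *ᵥ r := by
      rw [← Matrix.mulVec_add, hx', Matrix.mulVec_mulVec, hb, Matrix.mulVec_add,
        Matrix.mulVec_mulVec, hPA]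
    exact add_left_cancel h
  have hΔx : Δx = L *ᵥ (P *ᵥ r) - (L * ΔA) *ᵥ Δx := by
    rw [← hperturbed, Matrix.mulVec_mulVec, Matrix.mul_add, hL, Matrix.add_mulVec,
      Matrix.one_mulVec, add_sub_cancel_right]
  have hr : ‖toLp 2 r‖ ≤ ‖ΔA‖ * ‖toLp 2 x‖ + ‖toLp 2 Δb‖ := calc
    ‖toLp 2 r‖ ≤ ‖toLp 2 Δb‖ + ‖toLp 2 (ΔA *ᵥ x)‖ := by rw [toLp_sub]; exact norm_sub_le _ _
    _ ≤ _ := by linarith [ΔA.norm_toLp_mulVec_le x]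
  have hPr : ‖toLp 2 (L *ᵥ (P *ᵥ r))‖ ≤ ‖L‖ * ‖toLp 2 r‖ := calc
    _ ≤ ‖L‖ * (‖P‖ * ‖toLp 2 r‖) :=
      (L.norm_toLp_mulVec_le _).trans (by gcongr; exact P.norm_toLp_mulVec_le r)
    _ ≤ ‖L‖ * ‖toLp 2 r‖ := by gcongr; nlinarith [norm_nonneg (toLp 2 r)]
  have hLΔA : ‖toLp 2 ((L * ΔA) *ᵥ Δx)‖ ≤ ‖L‖ * ‖ΔA‖ * ‖toLp 2 Δx‖ :=
    ((L * ΔA).norm_toLp_mulVec_le Δx).trans (by gcongr; exact Matrix.l2_opNorm_mul _ _)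
  have hsplit : ‖toLp 2 Δx‖ ≤ ‖toLp 2 (L *ᵥ (P *ᵥ r))‖ + ‖toLp 2 ((L * ΔA) *ᵥ Δx)‖ := by
    conv_lhs => rw [hΔx]
    rw [toLp_sub]; exact norm_sub_le _ _
  nlinarith [norm_nonneg L]

end Perturbation

lemma Matrix.isUnit_transpose_mul_self {R m n : Type*} [Field R] [LinearOrder R]
    [IsStrictOrderedRing R] [Fintype m] [Fintype n] [DecidableEq n] {A : Matrix m n R}
    (hA : Function.Injective A.mulVec) : IsUnit (Aᵀ * A) := by
  rw [← Matrix.mulVec_injective_iff_isUnit, ← Matrix.coe_mulVecLin, ← LinearMap.ker_eq_bot,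
    Matrix.ker_mulVecLin_transpose_mul_self, LinearMap.ker_eq_bot, Matrix.coe_mulVecLin]
  exact hA

section Pinv

variable {m n : ℕ} {A ΔA : Matrix (Fin m) (Fin n) ℝ}

lemma pinv_mul_self (hA : Function.Injective A.mulVec) : pinv A * A = 1 := by
  rw [pinv, Matrix.mul_assoc]
  exact Matrix.nonsing_inv_mul _
    ((Matrix.isUnit_iff_isUnit_det _).1 (Matrix.isUnit_transpose_mul_self hA))

lemma isStarProjection_mul_pinv (hA : Function.Injective A.mulVec) :
    IsStarProjection (A * pinv A) := by
  refine ⟨?_, ?_⟩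
  · rw [IsIdempotentElem, Matrix.mul_assoc, ← Matrix.mul_assoc (pinv A), pinv_mul_self hA,
      Matrix.one_mul]
  · rw [IsSelfAdjoint, Matrix.star_eq_conjTranspose, Matrix.conjTranspose_eq_transpose_of_trivial,
      pinv, Matrix.transpose_mul, Matrix.transpose_mul, Matrix.transpose_nonsing_inv,
      Matrix.transpose_mul, Matrix.transpose_transpose, Matrix.mul_assoc]

lemma mulVec_pinv_mulVec_of_mem_colSpace (hA : Function.Injective A.mulVec) {b : Fin m → ℝ}
    (hb : b ∈ colSpace A) : A *ᵥ (pinv A *ᵥ b) = b := by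
  obtain ⟨y, rfl⟩ : ∃ y, A *ᵥ y = b := by
    change b ∈ Submodule.span ℝ (Set.range A.col) at hb
    rwa [← Matrix.range_mulVecLin] at hb
  rw [Matrix.mulVec_mulVec (M := pinv A), pinv_mul_self hA, Matrix.one_mulVec]

lemma norm_toLp_le_of_pinv_perturbation (hA : Function.Injective A.mulVec)
    (hpert : ‖pinv A‖ * ‖ΔA‖ < 1) {b Δb : Fin m → ℝ} {x Δx : Fin n → ℝ} (hb : b ∈ colSpace A)
    (hx : x = pinv A *ᵥ b) (hx' : x + Δx = pinv (A + ΔA) *ᵥ (b + Δb)) :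
    ‖toLp 2 Δx‖ ≤
      ‖pinv A‖ / (1 - ‖pinv A‖ * ‖ΔA‖) * (‖ΔA‖ * ‖toLp 2 x‖ + ‖toLp 2 Δb‖) := by
  have hÃ := injective_mulVec_add_of_norm_mul_lt_one (pinv_mul_self hA) hpert
  rw [div_mul_eq_mul_div, le_div_iff₀ (by linarith), mul_comm]
  exact one_sub_mul_norm_toLp_le_of_leftInverse (pinv_mul_self hA) (pinv_mul_self hÃ)
    (isStarProjection_mul_pinv hÃ).norm_le (hx ▸ mulVec_pinv_mulVec_of_mem_colSpace hA hb) hx'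

end Pinv

section TensorNorms

variable {a b c : ℕ} (G : Fin a → Fin b → Fin c → ℝ)

lemma norm_toLp_fiber_le_tnorm (i : Fin b) (j : Fin c) :
    ‖toLp 2 (fun k => G k i j)‖ ≤ tnorm G :=
  (Matrix.of fun x y => G x i y).norm_toLp_col_le j |>.trans <|
    le_ciSup (f := fun i => specNorm (Matrix.of fun x y => G x i y)) (Set.finite_range _).bddAbove i

lemma tnorm_nonneg : 0 ≤ tnorm G := Real.iSup_nonneg fun _ => norm_nonneg _

lemma supNorm3_nonneg : 0 ≤ supNorm3 G := Real.iSup_nonneg fun _ => abs_nonneg _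

lemma norm_toLp_fiber_le_sqrt_mul_supNorm3 (i : Fin b) (j : Fin c) :
    ‖toLp 2 (fun k => G k i j)‖ ≤ √a * supNorm3 G := by
  refine (norm_toLp_le_sqrt_card_mul_norm _).trans ?_
  rw [Fintype.card_fin]
  gcongr
  refine (pi_norm_le_iff_of_nonneg (supNorm3_nonneg G)).2 fun k => ?_
  exact le_ciSup (f := fun q : Fin a × Fin b × Fin c => |G q.1 q.2.1 q.2.2|)
    (Set.finite_range _).bddAbove (k, i, j)

lemma tnorm_le_sqrt_mul_of_norm_fiber_le {K : ℝ} (hK : 0 ≤ K)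
    (h : ∀ i j, ‖toLp 2 (fun k => G k i j)‖ ≤ K) : tnorm G ≤ √c * K :=
  Real.iSup_le (fun i => by
    simpa only [specNorm_eq_l2_opNorm, Fintype.card_fin] using
      Matrix.l2_opNorm_le_sqrt_card_mul (M := Matrix.of fun x y => G x i y) (h i))
    (by positivity)

end TensorNorms

lemma sqrt_mul_mul_add_le {m ℓ : ℕ} {K d t s : ℝ} (hK : 0 ≤ K) (hd : 0 ≤ d) (ht : 0 ≤ t)
    (hs : 0 ≤ s) (hm : m = 0 → d = 0) :
    √ℓ * (K * (d * t + √m * s)) ≤ √(2 * m * ℓ) * K * (d * t + s) := by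
  have hdt : √ℓ * (d * t) ≤ √(2 * m * ℓ) * (d * t) := by
    rcases Nat.eq_zero_or_pos m with h0 | hpos
    · simp [hm h0]
    · have : (1 : ℝ) ≤ m := by exact_mod_cast hpos
      gcongr; nlinarith [(ℓ.cast_nonneg : (0 : ℝ) ≤ ℓ)]
  have hs' : √ℓ * √m ≤ √(2 * m * ℓ) := by
    rw [← Real.sqrt_mul (by positivity)]
    exact Real.sqrt_le_sqrt (by nlinarith [mul_nonneg ℓ.cast_nonneg m.cast_nonneg (α := ℝ)])
  have hsum : √ℓ * (d * t + √m * s) ≤ √(2 * m * ℓ) * (d * t + s) := by nlinarith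
  nlinarith [mul_le_mul_of_nonneg_left hsum hK]

lemma div_le_two_mul_of_le_div_one_sub {T t C κ d s χ : ℝ}
    (hT : T ≤ C / (1 - κ) * (d * t + s)) (hC : 0 ≤ C) (hd : 0 ≤ d) (hs : 0 ≤ s)
    (hκ : κ ≤ 1 / 2) (hχ : 0 < χ) (hχt : χ ≤ t) : T / t ≤ 2 * C * (d + s * χ⁻¹) := by
  have ht : 0 < t := hχ.trans_le hχt
  have hCκ : C / (1 - κ) ≤ 2 * C := by rw [div_le_iff₀ (by linarith)]; nlinarith
  have hsχ : s ≤ s * χ⁻¹ * t := by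
    have h1 : 1 ≤ t / χ := (one_le_div hχ).2 hχt
    calc s = s * 1 := (mul_one s).symm
      _ ≤ s * (t / χ) := by gcongr
      _ = s * χ⁻¹ * t := by ring
  rw [div_le_iff₀ ht]
  calc T ≤ C / (1 - κ) * (d * t + s) := hT
    _ ≤ 2 * C * (d * t + s * χ⁻¹ * t) := by gcongr
    _ = 2 * C * (d + s * χ⁻¹) * t := by ring

theorem tensor_leastSquares_perturbation_general
    (m n ℓ₁ ℓ₂ : ℕ)
    (A ΔA : Matrix (Fin m) (Fin n) ℝ)
    (hA : A.rank = n)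
    (hpert : specNorm (pinv A) * specNorm ΔA < 1)
    (B ΔB : Fin m → Fin ℓ₁ → Fin ℓ₂ → ℝ)
    (X ΔX : Fin n → Fin ℓ₁ → Fin ℓ₂ → ℝ)
    (hX : ∀ c i₁ i₂, X c i₁ i₂ = ∑ j, pinv A c j * B j i₁ i₂)
    (hXp : ∀ c i₁ i₂, X c i₁ i₂ + ΔX c i₁ i₂ =
      ∑ j, pinv (A + ΔA) c j * (B j i₁ i₂ + ΔB j i₁ i₂)) :
    (A + ΔA).rank = n ∧
      ((∀ i₁ i₂, (fun j => B j i₁ i₂) ∈ colSpace A) →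
        tnorm ΔX ≤
          Real.sqrt (2 * (m : ℝ) * (ℓ₂ : ℝ)) * specNorm (pinv A) /
              (1 - specNorm (pinv A) * specNorm ΔA) *
            (specNorm ΔA * tnorm X + supNorm3 ΔB) ∧
        ∀ χ : ℝ, 0 < χ → χ ≤ tnorm X →
          specNorm (pinv A) * specNorm ΔA ≤ 1 / 2 →
          tnorm ΔX / tnorm X ≤
            Real.sqrt (8 * (m : ℝ) * (ℓ₂ : ℝ)) * specNorm (pinv A) *
              (specNorm ΔA + supNorm3 ΔB * χ⁻¹)) := by
  simp only [specNorm_eq_l2_opNorm] at hpert ⊢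
  have hAinj : Function.Injective A.mulVec := by
    simpa [← A.rank_eq_card_iff_injective_mulVec] using hA
  have hÃinj := injective_mulVec_add_of_norm_mul_lt_one (pinv_mul_self hAinj) hpert
  refine ⟨by simpa using (A + ΔA).rank_eq_card_iff_injective_mulVec.2 hÃinj, fun hB => ?_⟩
  have hK : 0 ≤ ‖pinv A‖ / (1 - ‖pinv A‖ * ‖ΔA‖) := div_nonneg (norm_nonneg _) (by linarith)
  have hfiber : ∀ i₁ i₂, ‖toLp 2 (fun c => ΔX c i₁ i₂)‖ ≤ ‖pinv A‖ /
      (1 - ‖pinv A‖ * ‖ΔA‖) * (‖ΔA‖ * tnorm X + √m * supNorm3 ΔB) := fun i₁ i₂ =>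
    (norm_toLp_le_of_pinv_perturbation hAinj hpert (hB i₁ i₂) (funext fun c => hX c i₁ i₂)
      (funext fun c => by simpa [Matrix.mulVec, dotProduct] using hXp c i₁ i₂)).trans
      (by gcongr
          · exact norm_toLp_fiber_le_tnorm X i₁ i₂
          · exact norm_toLp_fiber_le_sqrt_mul_supNorm3 ΔB i₁ i₂)
  have hbound : tnorm ΔX ≤ √(2 * m * ℓ₂) * ‖pinv A‖ / (1 - ‖pinv A‖ * ‖ΔA‖) *
      (‖ΔA‖ * tnorm X + supNorm3 ΔB) := by
    rw [mul_div_assoc]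
    refine (tnorm_le_sqrt_mul_of_norm_fiber_le ΔX (mul_nonneg hK ?_) hfiber).trans
      (sqrt_mul_mul_add_le hK (norm_nonneg ΔA) (tnorm_nonneg X) (supNorm3_nonneg ΔB)
        fun hm => by subst hm; simp [Subsingleton.elim ΔA 0])
    exact add_nonneg (mul_nonneg (norm_nonneg _) (tnorm_nonneg X))
      (mul_nonneg (Real.sqrt_nonneg _) (supNorm3_nonneg ΔB))
  refine ⟨hbound, fun χ hχ hχX hhalf => ?_⟩
  have h8 : √(8 * m * ℓ₂) = 2 * √(2 * m * ℓ₂) := by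
    rw [show (8 : ℝ) * m * ℓ₂ = 2 ^ 2 * (2 * m * ℓ₂) by ring, Real.sqrt_mul (by positivity),
      Real.sqrt_sq zero_le_two]
  calc _ ≤ 2 * (√(2 * m * ℓ₂) * ‖pinv A‖) * (‖ΔA‖ + supNorm3 ΔB * χ⁻¹) :=
        div_le_two_mul_of_le_div_one_sub hbound (by positivity) (norm_nonneg _)
          (supNorm3_nonneg ΔB) hhalf hχ hχX
    _ = _ := by rw [h8]; ring

/-- Lemma: perturbation of least-squares solutions of tensor equations.
Let `A ∈ ℝ^{m×n}` have full column rank `n ≤ m` and `ΔA` satisfy `‖A⁺‖·‖ΔA‖ < 1`.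
Then `A + ΔA` has rank `n`.  If `X` and `X + ΔX` are the least-squares solutions of
`A ∘ X = B` and `(A + ΔA) ∘ X = B + ΔB` (fiberwise `X(·,i₁,i₂) = A⁺ B(·,i₁,i₂)`), and
every fiber `B(·,i₁,i₂)` lies in the column space of `A`, then
`|||ΔX||| ≤ √(2 m ℓ₂) ‖A⁺‖ / (1 − ‖A⁺‖‖ΔA‖) · (‖ΔA‖ |||X||| + ‖ΔB‖_∞)`; in particular,
if `|||X||| ≥ χ > 0` and `‖A⁺‖‖ΔA‖ ≤ 1/2`, then
`|||ΔX|||/|||X||| ≤ √(8 m ℓ₂) ‖A⁺‖ (‖ΔA‖ + ‖ΔB‖_∞ χ⁻¹)`. -/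
theorem tensor_leastSquares_perturbation
    (m n ℓ₁ ℓ₂ : ℕ) (hnm : n ≤ m)
    (A ΔA : Matrix (Fin m) (Fin n) ℝ)
    (hA : A.rank = n)
    (hpert : specNorm (pinv A) * specNorm ΔA < 1)
    (B ΔB : Fin m → Fin ℓ₁ → Fin ℓ₂ → ℝ)
    (X ΔX : Fin n → Fin ℓ₁ → Fin ℓ₂ → ℝ)
    (hX : ∀ c i₁ i₂, X c i₁ i₂ = ∑ j, pinv A c j * B j i₁ i₂)
    (hXp : ∀ c i₁ i₂, X c i₁ i₂ + ΔX c i₁ i₂ =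
      ∑ j, pinv (A + ΔA) c j * (B j i₁ i₂ + ΔB j i₁ i₂)) :
    (A + ΔA).rank = n ∧
      ((∀ i₁ i₂, (fun j => B j i₁ i₂) ∈ colSpace A) →
        tnorm ΔX ≤
          Real.sqrt (2 * (m : ℝ) * (ℓ₂ : ℝ)) * specNorm (pinv A) /
              (1 - specNorm (pinv A) * specNorm ΔA) *
            (specNorm ΔA * tnorm X + supNorm3 ΔB) ∧
        ∀ χ : ℝ, 0 < χ → χ ≤ tnorm X →
          specNorm (pinv A) * specNorm ΔA ≤ 1 / 2 →
          tnorm ΔX / tnorm X ≤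
            Real.sqrt (8 * (m : ℝ) * (ℓ₂ : ℝ)) * specNorm (pinv A) *
              (specNorm ΔA + supNorm3 ΔB * χ⁻¹)) :=
  tensor_leastSquares_perturbation_general m n ℓ₁ ℓ₂ A ΔA hA hpert B ΔB X ΔX hX hXp
end

section
/- Let d ≥ 2 and let G_1 : [n_1]×[r_1] → ℝ, G_k : [r_{k−1}]×[n_k]×[r_k] → ℝ for k = 2,…,d−1, and G_d : [r_{d−1}]×[n_d] → ℝ, with perturbations ΔG_k of the same shapes. Suppose there exist δ_1,…,δ_d > 0 such that |||ΔG_k||| ≤ δ_k·|||G_k||| for all k = 1,…,d. Define Δ(G_1∘⋯∘G_d) := (G_1+ΔG_1)∘⋯∘(G_d+ΔG_d) − G_1∘⋯∘G_d. Then ‖Δ(G_1∘⋯∘G_d)‖_∞ ≤ |||G_1|||⋯|||G_d||| · (Σ_{k=1}^d δ_k) · exp(Σ_{k=1}^d δ_k). -/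
open scoped BigOperators
open Matrix

/-!
For a fixed value `a` of the dummy left index, contracting the first `k` cores gives a row
vector `P_k` with `P_{k+1} = P_k · G_k(x_k)`, so the slice bounds give
`‖P_k‖₂ ≤ ∏_{j<k} |||G_j|||`. The difference `D_k` between the perturbed and the unperturbed
vectors obeys `D_{k+1} = D_k · (G_k + ΔG_k)(x_k) + P_k · ΔG_k(x_k)`, and induction yields
`‖D_k‖₂ ≤ ∏_{j<k} |||G_j||| · (∑_{j<k} δ_j) · ∏_{j<k} (1 + δ_j)`. Since `r 0 = r d = 1`, the
entry of `D_d` is the perturbation of the contraction, and `∏ (1 + δ_j) ≤ exp (∑ δ_j)`.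
-/

open scoped Matrix.Norms.L2Operator

lemma Matrix.norm_toLp_vecMul_le {m k : Type*} [Fintype m] [Fintype k] [DecidableEq m]
    [DecidableEq k] (v : m → ℝ) (A : Matrix m k ℝ) :
    ‖WithLp.toLp 2 (v ᵥ* A)‖ ≤ ‖A‖ * ‖WithLp.toLp 2 v‖ := by
  have h := Matrix.l2_opNorm_mulVec Aᴴ (WithLp.toLp 2 v)
  rwa [Matrix.l2_opNorm_conjTranspose, Matrix.conjTranspose_eq_transpose_of_trivial,
    Matrix.mulVec_transpose] at h

section TensorTrain

variable {d : ℕ} {n r : ℕ → ℕ}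

def coreSlice (G : CoreType n r d) (k : Fin d) (i : Fin (n k)) :
    Matrix (Fin (r k)) (Fin (r (k + 1))) ℝ :=
  Matrix.of fun c b => G k c i b

lemma coreSlice_add (G ΔG : CoreType n r d) (k : Fin d) (i : Fin (n k)) :
    coreSlice (fun k => G k + ΔG k) k i = coreSlice G k i + coreSlice ΔG k i :=
  rfl

lemma tnorm_nonneg_s9 {a b c : ℕ} (G : Fin a → Fin b → Fin c → ℝ) : 0 ≤ tnorm G :=
  Real.iSup_nonneg fun _ => norm_nonneg _

lemma norm_coreSlice_le_tnorm (G : CoreType n r d) (k : Fin d) (i : Fin (n k)) :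
    ‖coreSlice G k i‖ ≤ tnorm (G k) :=
  le_ciSup (f := fun i => specNorm (Matrix.of fun x y => G k x i y)) (Finite.bddAbove_range _) i

noncomputable def prefixRow (G : CoreType n r d) (k : ℕ) (hk : k ≤ d) (x : PreIdx n k)
    (a : Fin (r 0)) : Fin (r k) → ℝ :=
  fun b => ttPrefixF G k hk x a b

lemma prefixRow_zero (G : CoreType n r d) (x : PreIdx n 0) (a : Fin (r 0)) :
    prefixRow G 0 (Nat.zero_le d) x a = Pi.single a 1 := by
  funext b
  simp [prefixRow, ttPrefixF, Pi.single_apply, Fin.val_inj, eq_comm]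

lemma prefixRow_succ (G : CoreType n r d) {k : ℕ} (hk : k + 1 ≤ d) (x : PreIdx n (k + 1))
    (a : Fin (r 0)) :
    prefixRow G (k + 1) hk x a =
      prefixRow G k (Nat.le_of_succ_le hk) (takePre x) a ᵥ*
        coreSlice G ⟨k, hk⟩ (x (Fin.last k)) :=
  rfl

lemma prod_castLE_succ {M : Type*} [CommMonoid M] (f : Fin d → M) {k : ℕ} (hk : k + 1 ≤ d) :
    ∏ j : Fin (k + 1), f (Fin.castLE hk j) =
      (∏ j : Fin k, f (Fin.castLE (Nat.le_of_succ_le hk) j)) * f ⟨k, hk⟩ :=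
  Fin.prod_univ_castSucc _

lemma sum_castLE_succ {M : Type*} [AddCommMonoid M] (f : Fin d → M) {k : ℕ} (hk : k + 1 ≤ d) :
    ∑ j : Fin (k + 1), f (Fin.castLE hk j) =
      (∑ j : Fin k, f (Fin.castLE (Nat.le_of_succ_le hk) j)) + f ⟨k, hk⟩ :=
  Fin.sum_univ_castSucc _

lemma norm_prefixRow_le (G : CoreType n r d) {g : Fin d → ℝ}
    (hg : ∀ k i, ‖coreSlice G k i‖ ≤ g k) (k : ℕ) (hk : k ≤ d) (x : PreIdx n k)
    (a : Fin (r 0)) :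
    ‖WithLp.toLp 2 (prefixRow G k hk x a)‖ ≤ ∏ j : Fin k, g (Fin.castLE hk j) := by
  induction k with
  | zero => simp [prefixRow_zero]
  | succ k ih =>
    have hg0 := (norm_nonneg _).trans (hg ⟨k, hk⟩ (x (Fin.last k)))
    rw [prefixRow_succ, prod_castLE_succ, mul_comm]
    exact (Matrix.norm_toLp_vecMul_le _ _).trans
      (mul_le_mul (hg _ _) (ih _ _) (norm_nonneg _) hg0)

lemma prefixRow_add_sub_succ (G ΔG : CoreType n r d) {k : ℕ} (hk : k + 1 ≤ d)
    (x : PreIdx n (k + 1)) (a : Fin (r 0)) :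
    prefixRow (fun k => G k + ΔG k) (k + 1) hk x a - prefixRow G (k + 1) hk x a =
      (prefixRow (fun k => G k + ΔG k) k (Nat.le_of_succ_le hk) (takePre x) a -
          prefixRow G k (Nat.le_of_succ_le hk) (takePre x) a) ᵥ*
          (coreSlice G ⟨k, hk⟩ (x (Fin.last k)) + coreSlice ΔG ⟨k, hk⟩ (x (Fin.last k))) +
        prefixRow G k (Nat.le_of_succ_le hk) (takePre x) a ᵥ*
          coreSlice ΔG ⟨k, hk⟩ (x (Fin.last k)) := by
  rw [prefixRow_succ, prefixRow_succ, coreSlice_add, Matrix.sub_vecMul, Matrix.vecMul_add,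
    Matrix.vecMul_add]
  abel

lemma norm_prefixRow_add_sub_le (G ΔG : CoreType n r d) {g e : Fin d → ℝ}
    (hg : ∀ k i, ‖coreSlice G k i‖ ≤ g k) (hΔ : ∀ k i, ‖coreSlice ΔG k i‖ ≤ e k * g k)
    (he : ∀ k, 0 ≤ e k) (k : ℕ) (hk : k ≤ d) (x : PreIdx n k) (a : Fin (r 0)) :
    ‖WithLp.toLp 2 (prefixRow (fun k => G k + ΔG k) k hk x a - prefixRow G k hk x a)‖ ≤
      (∏ j : Fin k, g (Fin.castLE hk j)) * (∑ j : Fin k, e (Fin.castLE hk j)) *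
        ∏ j : Fin k, (1 + e (Fin.castLE hk j)) := by
  induction k with
  | zero => simp [prefixRow_zero]
  | succ k ih =>
    have hk' := Nat.le_of_succ_le hk
    rw [prefixRow_add_sub_succ, prod_castLE_succ, sum_castLE_succ,
      prod_castLE_succ (fun j => 1 + e j)]
    set A := coreSlice G ⟨k, hk⟩ (x (Fin.last k))
    set E := coreSlice ΔG ⟨k, hk⟩ (x (Fin.last k))
    set P := prefixRow G k hk' (takePre x) a
    set D := prefixRow (fun k => G k + ΔG k) k hk' (takePre x) a - P
    set γ := ∏ j : Fin k, g (Fin.castLE hk' j)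
    set σ := ∑ j : Fin k, e (Fin.castLE hk' j)
    set π := ∏ j : Fin k, (1 + e (Fin.castLE hk' j))
    have hA := hg ⟨k, hk⟩ (x (Fin.last k))
    have hE := hΔ ⟨k, hk⟩ (x (Fin.last k))
    have hP : ‖WithLp.toLp 2 P‖ ≤ γ := norm_prefixRow_le G hg k hk' (takePre x) a
    have hγ : 0 ≤ γ := (norm_nonneg _).trans hP
    have hg0 : 0 ≤ g ⟨k, hk⟩ := (norm_nonneg _).trans hA
    have he0 := he ⟨k, hk⟩
    have hπ : 1 ≤ π := Finset.one_le_prod fun j _ => le_add_of_nonneg_right (he _)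
    calc ‖WithLp.toLp 2 (D ᵥ* (A + E) + P ᵥ* E)‖
        ≤ ‖A + E‖ * ‖WithLp.toLp 2 D‖ + ‖E‖ * ‖WithLp.toLp 2 P‖ := by
          rw [WithLp.toLp_add]
          exact (norm_add_le _ _).trans
            (add_le_add (Matrix.norm_toLp_vecMul_le _ _) (Matrix.norm_toLp_vecMul_le _ _))
      _ ≤ (g ⟨k, hk⟩ + e ⟨k, hk⟩ * g ⟨k, hk⟩) * (γ * σ * π) + e ⟨k, hk⟩ * g ⟨k, hk⟩ * γ := by
          have hAE : ‖A + E‖ ≤ g ⟨k, hk⟩ + e ⟨k, hk⟩ * g ⟨k, hk⟩ :=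
            (norm_add_le _ _).trans (add_le_add hA hE)
          have hD : ‖WithLp.toLp 2 D‖ ≤ γ * σ * π := ih hk' (takePre x)
          gcongr
      _ ≤ γ * g ⟨k, hk⟩ * (σ + e ⟨k, hk⟩) * (π * (1 + e ⟨k, hk⟩)) := by
          have h1 : 1 ≤ π * (1 + e ⟨k, hk⟩) := one_le_mul_of_one_le_of_one_le hπ (by linarith)
          have h2 : 0 ≤ e ⟨k, hk⟩ * g ⟨k, hk⟩ * γ := by positivity
          nlinarith [mul_le_mul_of_nonneg_left h1 h2]

lemma abs_ttContract_sub_le (G G' : CoreType n r d) (x : PreIdx n d) {C : ℝ}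
    (hC : ∀ a, ‖WithLp.toLp 2 (prefixRow G' d le_rfl x a - prefixRow G d le_rfl x a)‖ ≤ C) :
    |ttContract G' x - ttContract G x| ≤ r 0 * r d * C := by
  have hdiff : ttContract G' x - ttContract G x =
      ∑ a, ∑ b, (prefixRow G' d le_rfl x a - prefixRow G d le_rfl x a) b := by
    simp only [ttContract, prefixRow, Pi.sub_apply, Finset.sum_sub_distrib]
  calc |ttContract G' x - ttContract G x|
      ≤ ∑ a, ∑ b, |(prefixRow G' d le_rfl x a - prefixRow G d le_rfl x a) b| := by
        rw [hdiff]
        exact (Finset.abs_sum_le_sum_abs _ _).trans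
          (Finset.sum_le_sum fun a _ => Finset.abs_sum_le_sum_abs _ _)
    _ ≤ ∑ _a : Fin (r 0), ∑ _b : Fin (r d), C :=
        Finset.sum_le_sum fun a _ => Finset.sum_le_sum fun b _ =>
          (PiLp.norm_apply_le (WithLp.toLp 2 _) b).trans (hC a)
    _ = r 0 * r d * C := by simp [mul_assoc]

end TensorTrain

/-- Lemma: perturbation bound for the contraction of cores.
If `|||ΔG_k||| ≤ δ_k |||G_k|||` for all `k = 1, …, d` with `δ_k > 0`, then
`‖(G_1+ΔG_1)∘⋯∘(G_d+ΔG_d) − G_1∘⋯∘G_d‖_∞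
  ≤ |||G_1|||⋯|||G_d||| · (Σ_k δ_k) · exp(Σ_k δ_k)`.
(Here `d = d₀ + 2 ≥ 2`; the first/last cores carry dummy indices of size
`r 0 = 1`, `r d = 1`, for which the slice norm `tnorm` agrees with the Euclidean
row/column norms of the paper.) -/
theorem contraction_perturbation_bound
    (d₀ : ℕ) (n r : ℕ → ℕ) (hr0 : r 0 = 1) (hrd : r (d₀ + 2) = 1)
    (G ΔG : CoreType n r (d₀ + 2)) (δ : Fin (d₀ + 2) → ℝ)
    (hδpos : ∀ k, 0 < δ k)
    (hpert : ∀ k, tnorm (ΔG k) ≤ δ k * tnorm (G k)) :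
    supNormF (fun x => ttContract (fun k => G k + ΔG k) x - ttContract G x) ≤
      (∏ k, tnorm (G k)) * (∑ k, δ k) * Real.exp (∑ k, δ k) := by
  have hg := norm_coreSlice_le_tnorm G
  have hΔ k i : ‖coreSlice ΔG k i‖ ≤ δ k * tnorm (G k) :=
    (norm_coreSlice_le_tnorm ΔG k i).trans (hpert k)
  have hδ k := (hδpos k).le
  have hexp := Real.prod_one_add_le_exp_sum Finset.univ hδ
  have hG0 : 0 ≤ ∏ k, tnorm (G k) := Finset.prod_nonneg fun k _ => tnorm_nonneg_s9 _
  have hS0 : 0 ≤ ∑ k, δ k := Finset.sum_nonneg fun k _ => hδ k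
  refine Real.iSup_le (fun x => ?_) (by positivity)
  calc |ttContract (fun k => G k + ΔG k) x - ttContract G x|
      ≤ r 0 * r (d₀ + 2) * ((∏ k, tnorm (G k)) * (∑ k, δ k) * ∏ k, (1 + δ k)) :=
        abs_ttContract_sub_le _ _ x fun a =>
          norm_prefixRow_add_sub_le G ΔG hg hΔ hδ _ le_rfl x a
    _ ≤ _ := by
        rw [hr0, hrd]
        simp only [Nat.cast_one, one_mul]
        exact mul_le_mul_of_nonneg_left hexp (mul_nonneg hG0 hS0)
end

section
/- Let d ≥ 2. For k = 1,…,d−1 let A_k ∈ ℝ^{m_k×r_k} have full column rank r_k. Let B_1 ∈ ℝ^{n_1×r_1}, B_k ∈ ℝ^{m_{k−1}×n_k×r_k} for k = 2,…,d−1, and B_d ∈ ℝ^{m_{d−1}×n_d}, and assume that for each k = 2,…,d the fibers B_k(·,x_k,α_k) (resp. B_d(·,x_d)) all lie in the column space of A_{k−1}, so that the system G_1 = B_1, A_{k−1}∘G_k = B_k (k = 2,…,d−1), A_{d−1}G_d = B_d has exact solutions G_1,…,G_d; assume |||G_k||| > 0 for all k. Set r = max_{1≤k≤d−1} r_k, m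 = max_{1≤k≤d−1} m_k, n = max_{1≤k≤d} n_k, c_G = min_{1≤k≤d} |||G_k|||, c_A = max(1, max_{1≤k≤d−1} ‖A_k⁺‖), and β = (√(8 r max(m,n)) · c_A · (1 + 1/c_G))⁻¹. Given δ ∈ (0,1), suppose perturbations ΔA_1,…,ΔA_{d−1}, ΔB_1,…,ΔB_d of the same shapes satisfy ‖ΔA_k‖ ≤ δβ for all k = 1,…,d−1 and ‖ΔB_k‖_∞ ≤ δβ for all k = 1,…,d. Then the perturbed system with coefficients A_k+ΔA_k and right-hand sides B_k+ΔB_k has least-squares solutions G_k + ΔG_k (i.e., G_1+ΔG_1 = B_1+ΔB_1 and G_k+ΔG_k = (A_{k−1}+ΔA_{k−1})⁺∘(B_k+ΔB_k) for k ≥ 2), and these satisfy |||ΔG_k|||/|||G_k||| ≤ δ for every k = 1,…,d. -/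
open scoped BigOperators
open Matrix

/-- The admissible perturbation size
`β = (√(8 r max(m, n)) · c_A · (1 + 1/c_G))⁻¹`, where `r = max_{1≤k≤d-1} r_k`,
`m = max_{1≤k≤d-1} m_k`, `n = max_{1≤k≤d} n_k`, `c_G = min_k |||G_k|||`, and
`c_A = max(1, max_{1≤k≤d-1} ‖A_k⁺‖)` (here `d = d₀ + 2`). -/
noncomputable def pertBound (d₀ : ℕ) (n r m : ℕ → ℕ) (G : CoreType n r (d₀ + 2))
    (A : ∀ k : ℕ, Matrix (Fin (m k)) (Fin (r k)) ℝ) : ℝ :=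
  (Real.sqrt (8 * ((Finset.univ.sup fun j : Fin (d₀ + 1) => r ((j : ℕ) + 1) : ℕ) : ℝ) *
        ((max (Finset.univ.sup fun j : Fin (d₀ + 1) => m ((j : ℕ) + 1))
            (Finset.univ.sup fun j : Fin (d₀ + 2) => n (j : ℕ)) : ℕ) : ℝ)) *
      (max 1 (⨆ j : Fin (d₀ + 1), specNorm (pinv (A ((j : ℕ) + 1))))) *
      (1 + 1 / ⨅ k : Fin (d₀ + 2), tnorm (G k)))⁻¹

/-!
Every core is the solution of its own (least-squares) linear system, so the cores can be
estimated one slice `G_k(·, x, ·)` at a time. The first core is perturbed only by `ΔB_1`. For the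
other cores, once `(A + ΔA)⁺ (A + ΔA) = 1` we have
`(A + ΔA)⁺ (A X + ΔB) - X = (A + ΔA)⁺ (ΔB - ΔA X)`, and `2 c_A ‖ΔA‖ ≤ 1` keeps
`‖w‖ ≤ 2 c_A ‖(A + ΔA) w‖`, whence `‖(A + ΔA)⁺‖ ≤ 2 c_A`. Entrywise bounds give
`‖ΔB‖ ≤ √(m r) δβ`, and the choice of `β` gives `2 c_A β (√(m r) + |||G_k|||) ≤ |||G_k|||`.
-/

open scoped Matrix.Norms.L2Operator
open WithLp (toLp)

namespace Matrix

theorem mulVec_injective_of_rank_eq {m n : Type*} [Fintype n] {A : Matrix m n ℝ}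
    (h : A.rank = Fintype.card n) : Function.Injective A.mulVec := by
  have := LinearMap.finrank_range_add_finrank_ker A.mulVecLin
  rw [← rank, h, Module.finrank_fintype_fun_eq_card] at this
  rw [← coe_mulVecLin, ← LinearMap.ker_eq_bot]
  exact Submodule.finrank_eq_zero.mp (by omega)

variable {m n : Type*} [Fintype m] [Fintype n]

theorem l2_opNorm_le_of_forall_norm_mulVec_le [DecidableEq n] {M : Matrix m n ℝ} {c : ℝ}
    (hc : 0 ≤ c) (h : ∀ v, ‖toLp 2 (M *ᵥ v)‖ ≤ c * ‖toLp 2 v‖) : ‖M‖ ≤ c :=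
  ContinuousLinearMap.opNorm_le_bound _ hc fun x => h x.ofLp

theorem norm_toLp_mulVec_le_s12 [DecidableEq n] (M : Matrix m n ℝ) (v : n → ℝ) :
    ‖toLp 2 (M *ᵥ v)‖ ≤ ‖M‖ * ‖toLp 2 v‖ :=
  M.l2_opNorm_mulVec (toLp 2 v)

theorem l2_opNorm_le_sqrt_card_mul_of_abs_le [DecidableEq n] {M : Matrix m n ℝ} {c : ℝ}
    (hc : 0 ≤ c) (h : ∀ i j, |M i j| ≤ c) :
    ‖M‖ ≤ √(Fintype.card m * Fintype.card n) * c := by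
  refine l2_opNorm_le_of_forall_norm_mulVec_le (by positivity) fun v => ?_
  have hrow (i : m) : (M *ᵥ v) i ^ 2 ≤ Fintype.card n * c ^ 2 * ∑ j, v j ^ 2 :=
    calc (M *ᵥ v) i ^ 2 ≤ (∑ j, M i j ^ 2) * ∑ j, v j ^ 2 :=
          Finset.sum_mul_sq_le_sq_mul_sq _ _ _
      _ ≤ (∑ _j : n, c ^ 2) * ∑ j, v j ^ 2 := by
          refine mul_le_mul_of_nonneg_right (Finset.sum_le_sum fun j _ => ?_) (by positivity)
          simpa using pow_le_pow_left₀ (abs_nonneg _) (h i j) 2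
      _ = _ := by simp
  rw [EuclideanSpace.norm_eq, EuclideanSpace.norm_eq, ← Real.sqrt_sq hc,
    ← Real.sqrt_mul (by positivity), ← Real.sqrt_mul (by positivity)]
  gcongr
  simp only [Real.norm_eq_abs, sq_abs]
  calc ∑ i, (M *ᵥ v) i ^ 2 ≤ ∑ _i : m, Fintype.card n * c ^ 2 * ∑ j, v j ^ 2 :=
        Finset.sum_le_sum fun i _ => hrow i
    _ = _ := by simp only [Finset.sum_const, Finset.card_univ, nsmul_eq_mul]; ring

theorem norm_le_mul_norm_mulVec_of_mul_eq_one [DecidableEq m] [DecidableEq n]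
    {L : Matrix n m ℝ} {M : Matrix m n ℝ} (h : L * M = 1) (v : n → ℝ) :
    ‖toLp 2 v‖ ≤ ‖L‖ * ‖toLp 2 (M *ᵥ v)‖ := by
  simpa [mulVec_mulVec, h] using L.norm_toLp_mulVec_le_s12 (M *ᵥ v)

theorem norm_le_two_mul_norm_add_mulVec [DecidableEq m] [DecidableEq n] {L : Matrix n m ℝ}
    {A ΔA : Matrix m n ℝ} (hLA : L * A = 1) (hΔA : 2 * ‖L‖ * ‖ΔA‖ ≤ 1) (v : n → ℝ) :
    ‖toLp 2 v‖ ≤ 2 * ‖L‖ * ‖toLp 2 ((A + ΔA) *ᵥ v)‖ := by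
  have hA := norm_le_mul_norm_mulVec_of_mul_eq_one hLA v
  have hsplit : ‖toLp 2 (A *ᵥ v)‖ ≤ ‖toLp 2 ((A + ΔA) *ᵥ v)‖ + ‖ΔA‖ * ‖toLp 2 v‖ :=
    calc ‖toLp 2 (A *ᵥ v)‖ = ‖toLp 2 ((A + ΔA) *ᵥ v) - toLp 2 (ΔA *ᵥ v)‖ := by
          simp [add_mulVec]
      _ ≤ _ := norm_sub_le _ _
      _ ≤ _ := by gcongr; exact ΔA.norm_toLp_mulVec_le_s12 v
  nlinarith [norm_nonneg L, norm_nonneg (toLp 2 v)]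

theorem mulVec_injective_of_norm_le_mul {M : Matrix m n ℝ} {K : ℝ}
    (h : ∀ v, ‖toLp 2 v‖ ≤ K * ‖toLp 2 (M *ᵥ v)‖) : Function.Injective M.mulVec := by
  refine (injective_iff_map_eq_zero M.mulVecLin).2 fun v hv => ?_
  rw [mulVecLin_apply] at hv
  simpa [hv] using h v

theorem isUnit_transpose_mul_self_s12 {M : Matrix m n ℝ} [DecidableEq n]
    (h : Function.Injective M.mulVec) : IsUnit (Mᵀ * M) := by
  rw [← mulVec_injective_iff_isUnit, ← coe_mulVecLin, ← LinearMap.ker_eq_bot,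
    ker_mulVecLin_transpose_mul_self, LinearMap.ker_eq_bot]
  exact h

end Matrix

section Pinv

variable {a b : ℕ} {M : Matrix (Fin a) (Fin b) ℝ}

theorem pinv_mul_self_s12 (h : Function.Injective M.mulVec) : pinv M * M = 1 := by
  rw [pinv, Matrix.mul_assoc]
  exact nonsing_inv_mul _ ((isUnit_iff_isUnit_det _).1 (isUnit_transpose_mul_self_s12 h))

theorem transpose_mul_self_mul_pinv (h : Function.Injective M.mulVec) :
    Mᵀ * M * pinv M = Mᵀ := by
  rw [pinv, ← Matrix.mul_assoc, mul_nonsing_inv _ ((isUnit_iff_isUnit_det _).1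
    (isUnit_transpose_mul_self_s12 h)), Matrix.one_mul]

theorem l2_opNorm_pinv_le {K : ℝ} (hK : 0 ≤ K)
    (h : ∀ v, ‖toLp 2 v‖ ≤ K * ‖toLp 2 (M *ᵥ v)‖) : ‖pinv M‖ ≤ K := by
  refine l2_opNorm_le_of_forall_norm_mulVec_le hK fun v => ?_
  have hnormal : Mᵀ *ᵥ (M *ᵥ (pinv M *ᵥ v)) = Mᵀ *ᵥ v := by
    rw [mulVec_mulVec, mulVec_mulVec,
      transpose_mul_self_mul_pinv (mulVec_injective_of_norm_le_mul h)]
  generalize pinv M *ᵥ v = w at hnormal ⊢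
  have hT (x : Fin a → ℝ) : w ⬝ᵥ Mᵀ *ᵥ x = M *ᵥ w ⬝ᵥ x := by
    rw [dotProduct_mulVec, vecMul_transpose]
  -- The normal equations make `M w` the orthogonal projection of `v` onto the range of `M`.
  have hsq : ‖toLp 2 (M *ᵥ w)‖ ^ 2 = inner ℝ (toLp 2 (M *ᵥ w)) (toLp 2 v) := by
    rw [← real_inner_self_eq_norm_sq]
    simp only [EuclideanSpace.inner_toLp_toLp, star_trivial]
    rw [dotProduct_comm v, ← hT, ← hT, hnormal]
  have hMw : ‖toLp 2 (M *ᵥ w)‖ ≤ ‖toLp 2 v‖ := by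
    nlinarith [real_inner_le_norm (toLp 2 (M *ᵥ w)) (toLp 2 v), norm_nonneg (toLp 2 (M *ᵥ w)),
      norm_nonneg (toLp 2 v)]
  exact (h w).trans (by gcongr)

theorem l2_opNorm_pinv_add_mul_add_sub_le {ι : Type*} [Fintype ι] [DecidableEq ι]
    {A ΔA : Matrix (Fin a) (Fin b) ℝ} {X : Matrix (Fin b) ι ℝ} {ΔB : Matrix (Fin a) ι ℝ} {c : ℝ}
    (hA : pinv A * A = 1) (hc : ‖pinv A‖ ≤ c) (hΔA : 2 * c * ‖ΔA‖ ≤ 1) :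
    ‖pinv (A + ΔA) * (A * X + ΔB) - X‖ ≤ 2 * c * (‖ΔB‖ + ‖ΔA‖ * ‖X‖) := by
  have hc0 : 0 ≤ c := (norm_nonneg _).trans hc
  have hlower (v : Fin b → ℝ) : ‖toLp 2 v‖ ≤ 2 * c * ‖toLp 2 ((A + ΔA) *ᵥ v)‖ := by
    refine (norm_le_two_mul_norm_add_mulVec hA ?_ v).trans (by gcongr)
    exact (mul_le_mul_of_nonneg_right (by gcongr) (norm_nonneg _)).trans hΔA
  have hP := pinv_mul_self_s12 (mulVec_injective_of_norm_le_mul hlower)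
  have hdiff : pinv (A + ΔA) * (A * X + ΔB) - X = pinv (A + ΔA) * (ΔB - ΔA * X) := by
    rw [show A * X + ΔB = (A + ΔA) * X + (ΔB - ΔA * X) by rw [Matrix.add_mul]; abel,
      Matrix.mul_add, ← Matrix.mul_assoc, hP, Matrix.one_mul, add_sub_cancel_left]
  calc ‖pinv (A + ΔA) * (A * X + ΔB) - X‖ ≤ ‖pinv (A + ΔA)‖ * ‖ΔB - ΔA * X‖ :=
        hdiff ▸ l2_opNorm_mul _ _
    _ ≤ 2 * c * (‖ΔB‖ + ‖ΔA‖ * ‖X‖) := by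
        gcongr
        · exact l2_opNorm_pinv_le (by positivity) hlower
        · exact (norm_sub_le _ _).trans (by gcongr; exact l2_opNorm_mul _ _)

end Pinv

/-- `pertBound d₀ n r m G A` unfolds to `perturbationSize (√(8 r max(m, n))) c_A c_G`. -/
noncomputable def perturbationSize (S cA cG : ℝ) : ℝ := (S * cA * (1 + 1 / cG))⁻¹

section PerturbationSize

variable {S cA cG : ℝ}

theorem perturbationSize_pos (hS : 0 < S) (hcA : 0 < cA) (hcG : 0 < cG) :
    0 < perturbationSize S cA cG := by
  unfold perturbationSize; positivity

theorem two_mul_mul_perturbationSize_le_one (hS : 2 ≤ S) (hcA : 0 < cA) (hcG : 0 < cG) :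
    2 * cA * perturbationSize S cA cG ≤ 1 := by
  rw [perturbationSize, show 2 * cA * (S * cA * (1 + 1 / cG))⁻¹ = 2 / (S * (1 + 1 / cG)) by
    field_simp, div_le_one (by positivity)]
  nlinarith [one_div_pos.2 hcG]

theorem two_mul_mul_perturbationSize_mul_add_le {q t : ℝ} (hcA : 0 < cA) (hcG : 0 < cG)
    (hq : 1 ≤ q) (hS : 2 * q ≤ S) (ht : cG ≤ t) :
    2 * cA * perturbationSize S cA cG * (q + t) ≤ t := by
  have ht0 : 0 < t := hcG.trans_le ht
  have hS0 : 0 < S := by linarith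
  have htG : 1 ≤ t / cG := (one_le_div hcG).2 ht
  rw [perturbationSize, show 2 * cA * (S * cA * (1 + 1 / cG))⁻¹ * (q + t) =
    2 * (q + t) / (S * (1 + 1 / cG)) by field_simp, div_le_iff₀ (by positivity)]
  calc 2 * (q + t) ≤ 2 * q * (t + t / cG) := by
        nlinarith [mul_le_mul_of_nonneg_left htG (by linarith : 0 ≤ q)]
    _ ≤ S * (t + t / cG) := by gcongr
    _ = t * (S * (1 + 1 / cG)) := by ring

theorem l2_opNorm_le_of_abs_le_perturbationSize {a c : ℕ} {X : Matrix (Fin a) (Fin c) ℝ}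
    {δ t : ℝ} (hcA : 1 ≤ cA) (hcG : 0 < cG) (hdim : 0 < a * c) (hS : 2 * √(a * c) ≤ S)
    (ht : cG ≤ t) (hδ : 0 ≤ δ) (hX : ∀ i j, |X i j| ≤ δ * perturbationSize S cA cG) :
    ‖X‖ ≤ δ * t := by
  set q := √((a : ℝ) * c)
  set β := perturbationSize S cA cG
  have hq : 1 ≤ q := Real.one_le_sqrt.2 (by exact_mod_cast hdim)
  have hβ : 0 < β := perturbationSize_pos (by linarith) (by linarith) hcG
  have hbudget := two_mul_mul_perturbationSize_mul_add_le (cA := cA) (by linarith) hcG hq hS ht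
  calc ‖X‖ ≤ q * (δ * β) := by
        simpa only [Fintype.card_fin] using
          X.l2_opNorm_le_sqrt_card_mul_of_abs_le (by positivity) hX
    _ = δ * (q * β) := by ring
    _ ≤ δ * t := by
        gcongr
        nlinarith [mul_nonneg (mul_nonneg hβ.le (by linarith : (0 : ℝ) ≤ q))
          (by linarith : 0 ≤ cA - 1), mul_nonneg hβ.le (hcG.le.trans ht)]

end PerturbationSize

theorem l2_opNorm_sub_le_of_perturbed_solution {S cA cG : ℝ} {a b c : ℕ}
    {A ΔA : Matrix (Fin a) (Fin b) ℝ} {X Y : Matrix (Fin b) (Fin c) ℝ} {B ΔB : Fin a → Fin c → ℝ}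
    {δ t : ℝ} (hcA : 1 ≤ cA) (hcG : 0 < cG) (hdim : 0 < a * c) (hS : 2 * √(a * c) ≤ S)
    (ht : cG ≤ t) (hA : A.rank = b) (hpinv : ‖pinv A‖ ≤ cA) (hX : ‖X‖ ≤ t) (hδ0 : 0 ≤ δ)
    (hδ1 : δ ≤ 1) (hΔA : ‖ΔA‖ ≤ δ * perturbationSize S cA cG)
    (hΔB : ∀ i j, |ΔB i j| ≤ δ * perturbationSize S cA cG)
    (hsol : ∀ i j, ∑ k, A i k * X k j = B i j)
    (hpert : ∀ k j, Y k j = ∑ i, pinv (A + ΔA) k i * (B i j + ΔB i j)) :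
    ‖Y - X‖ ≤ δ * t := by
  set β := perturbationSize S cA cG
  set q := √((a : ℝ) * c)
  have hq : 1 ≤ q := Real.one_le_sqrt.2 (by exact_mod_cast hdim)
  have hβ : 0 < β := perturbationSize_pos (by linarith) (by linarith) hcG
  have hAX : A * X = of B := by ext i j; exact hsol i j
  have hY : Y = pinv (A + ΔA) * (A * X + of ΔB) := by
    ext k j; simp [hpert, hAX, mul_apply]
  have hΔB' : ‖of ΔB‖ ≤ q * (δ * β) := by
    simpa only [Fintype.card_fin] using
      (of ΔB).l2_opNorm_le_sqrt_card_mul_of_abs_le (by positivity) hΔB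
  have hΔA' : 2 * cA * ‖ΔA‖ ≤ 1 :=
    calc 2 * cA * ‖ΔA‖ ≤ 2 * cA * β := by gcongr; nlinarith
      _ ≤ 1 := two_mul_mul_perturbationSize_le_one (by linarith) (by linarith) hcG
  have hA1 : pinv A * A = 1 := pinv_mul_self_s12 (mulVec_injective_of_rank_eq (by simpa using hA))
  rw [hY]
  calc ‖pinv (A + ΔA) * (A * X + of ΔB) - X‖ ≤ 2 * cA * (‖of ΔB‖ + ‖ΔA‖ * ‖X‖) :=
        l2_opNorm_pinv_add_mul_add_sub_le hA1 hpinv hΔA'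
    _ ≤ 2 * cA * (q * (δ * β) + δ * β * t) := by gcongr
    _ = δ * (2 * cA * β * (q + t)) := by ring
    _ ≤ δ * t := by
        gcongr
        exact two_mul_mul_perturbationSize_mul_add_le (by linarith) hcG hq hS ht

section TNorm

theorem specNorm_eq_l2_opNorm_s12 {R C : Type*} [Fintype R] [Fintype C] [DecidableEq C]
    (M : Matrix R C ℝ) : specNorm M = ‖M‖ := rfl

variable {a b c : ℕ}

theorem tnorm_le_of_forall {G : Fin a → Fin b → Fin c → ℝ} {t : ℝ} (ht : 0 ≤ t)
    (h : ∀ i, specNorm (of fun x y => G x i y) ≤ t) : tnorm G ≤ t :=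
  Real.iSup_le h ht

theorem specNorm_le_tnorm (G : Fin a → Fin b → Fin c → ℝ) (i : Fin b) :
    specNorm (of fun x y => G x i y) ≤ tnorm G :=
  le_ciSup (f := fun i => specNorm (of fun x y => G x i y)) (Set.finite_range _).bddAbove i

theorem pos_of_tnorm_pos {G : Fin a → Fin b → Fin c → ℝ} (h : 0 < tnorm G) : 0 < a := by
  refine Nat.pos_of_ne_zero fun ha => h.not_ge (tnorm_le_of_forall le_rfl fun i => ?_)
  subst ha
  rw [specNorm_eq_l2_opNorm_s12, Subsingleton.elim (of fun x y => G x i y) 0, norm_zero]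

end TNorm

theorem le_sup_fin_succ (f : ℕ → ℕ) {d₀ k : ℕ} (h1 : 1 ≤ k) (h2 : k ≤ d₀ + 1) :
    f k ≤ Finset.univ.sup fun j : Fin (d₀ + 1) => f ((j : ℕ) + 1) := by
  obtain ⟨j, rfl⟩ := Nat.exists_eq_add_of_le' h1
  exact Finset.le_sup (f := fun j : Fin (d₀ + 1) => f ((j : ℕ) + 1))
    (Finset.mem_univ ⟨j, by omega⟩)

theorem le_ciSup_fin_succ (f : ℕ → ℝ) {d₀ k : ℕ} (h1 : 1 ≤ k) (h2 : k ≤ d₀ + 1) :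
    f k ≤ ⨆ j : Fin (d₀ + 1), f ((j : ℕ) + 1) := by
  obtain ⟨j, rfl⟩ := Nat.exists_eq_add_of_le' h1
  exact le_ciSup (f := fun j : Fin (d₀ + 1) => f ((j : ℕ) + 1)) (Set.finite_range _).bddAbove
    ⟨j, by omega⟩

theorem two_mul_sqrt_mul_le_sqrt {p q M N R : ℕ} (hpM : p ≤ M) (hqR : q ≤ R) :
    2 * √((p : ℝ) * q) ≤ √(8 * (R : ℝ) * (max M N : ℕ)) := by
  have hpM' : (p : ℝ) ≤ (max M N : ℕ) := by exact_mod_cast hpM.trans (le_max_left M N)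
  have hqR' : (q : ℝ) ≤ R := by exact_mod_cast hqR
  rw [Real.le_sqrt (by positivity) (by positivity), mul_pow, Real.sq_sqrt (by positivity)]
  nlinarith [mul_le_mul hpM' hqR' (by positivity) (by positivity)]

-- Indices are 0-based with `d = d₀ + 2`: `A j` and `Bmid j` are the paper's `A_j` and `B_{j+1}`.
/-- Lemma: stability of the core determining system.
Let `A_k` (`k = 1, …, d-1`) have full column rank `r_k`, let the fibers of the
right-hand sides `B_k` lie in the column spaces of the corresponding `A_{k-1}`, and
let `G_1, …, G_d` be the exact solutions of the system `G_1 = B_1`,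
`A_{k-1} ∘ G_k = B_k`, `A_{d-1} G_d = B_d`, with `|||G_k||| > 0`.  If all perturbations
satisfy `‖ΔA_k‖ ≤ δβ` and `‖ΔB_k‖_∞ ≤ δβ` with `β` as in `pertBound`, then the
least-squares solutions `G_k + ΔG_k` of the perturbed system satisfy
`|||ΔG_k||| / |||G_k||| ≤ δ` for every `k`.
(Here `d = d₀ + 2 ≥ 2`, 0-based: `Bmid j` / `A j` for `1 ≤ j ≤ d₀ + 1` are the paper's
`B_{j+1}` / `A_j`; the first/last cores carry dummy indices of size `r 0 = r d = 1`.) -/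
theorem core_system_perturbation
    (d₀ : ℕ) (n r m : ℕ → ℕ) (hr0 : r 0 = 1) (hrd : r (d₀ + 2) = 1)
    (A ΔA : ∀ k : ℕ, Matrix (Fin (m k)) (Fin (r k)) ℝ)
    (hArank : ∀ k, 1 ≤ k → k ≤ d₀ + 1 → (A k).rank = r k)
    (B1 ΔB1 : Fin (n 0) → Fin (r 1) → ℝ)
    (Bmid ΔBmid : ∀ j : ℕ, Fin (m j) → Fin (n j) → Fin (r (j + 1)) → ℝ)
    (Bd ΔBd : Fin (m (d₀ + 1)) → Fin (n (d₀ + 1)) → ℝ)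
    (G : CoreType n r (d₀ + 2))
    (hG1 : ∀ (a : Fin (r 0)) (x : Fin (n 0)) (α : Fin (r 1)),
      G ⟨0, by omega⟩ a x α = B1 x α)
    (hGmid : ∀ j : ℕ, ∀ _hj1 : 1 ≤ j, ∀ _hj2 : j ≤ d₀,
      ∀ (β : Fin (m j)) (x : Fin (n j)) (α : Fin (r (j + 1))),
      (∑ c : Fin (r j), A j β c * G ⟨j, by omega⟩ c x α) = Bmid j β x α)
    (hGlast : ∀ (β : Fin (m (d₀ + 1))) (x : Fin (n (d₀ + 1))) (b : Fin (r (d₀ + 2))),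
      (∑ c : Fin (r (d₀ + 1)), A (d₀ + 1) β c * G ⟨d₀ + 1, by omega⟩ c x b) = Bd β x)
    (hGpos : ∀ k : Fin (d₀ + 2), 0 < tnorm (G k))
    (δ : ℝ) (hδ0 : 0 < δ) (hδ1 : δ < 1)
    (hΔA : ∀ k, 1 ≤ k → k ≤ d₀ + 1 →
      specNorm (ΔA k) ≤ δ * pertBound d₀ n r m G A)
    (hΔB1 : ∀ x α, |ΔB1 x α| ≤ δ * pertBound d₀ n r m G A)
    (hΔBmid : ∀ j, 1 ≤ j → j ≤ d₀ → ∀ β x α,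
      |ΔBmid j β x α| ≤ δ * pertBound d₀ n r m G A)
    (hΔBd : ∀ β x, |ΔBd β x| ≤ δ * pertBound d₀ n r m G A)
    (Gp : CoreType n r (d₀ + 2))
    (hGp1 : ∀ (a : Fin (r 0)) (x : Fin (n 0)) (α : Fin (r 1)),
      Gp ⟨0, by omega⟩ a x α = B1 x α + ΔB1 x α)
    (hGpmid : ∀ j : ℕ, ∀ _hj1 : 1 ≤ j, ∀ _hj2 : j ≤ d₀,
      ∀ (c : Fin (r j)) (x : Fin (n j)) (α : Fin (r (j + 1))),
      Gp ⟨j, by omega⟩ c x α =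
        ∑ β : Fin (m j), pinv (A j + ΔA j) c β * (Bmid j β x α + ΔBmid j β x α))
    (hGplast : ∀ (c : Fin (r (d₀ + 1))) (x : Fin (n (d₀ + 1))) (b : Fin (r (d₀ + 2))),
      Gp ⟨d₀ + 1, by omega⟩ c x b =
        ∑ β : Fin (m (d₀ + 1)),
          pinv (A (d₀ + 1) + ΔA (d₀ + 1)) c β * (Bd β x + ΔBd β x)) :
    ∀ k : Fin (d₀ + 2),
      tnorm (fun a x b => Gp k a x b - G k a x b) / tnorm (G k) ≤ δ := by
  intro k
  set R := Finset.univ.sup fun j : Fin (d₀ + 1) => r ((j : ℕ) + 1)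
  set M := Finset.univ.sup fun j : Fin (d₀ + 1) => m ((j : ℕ) + 1)
  set N := Finset.univ.sup fun j : Fin (d₀ + 2) => n (j : ℕ)
  set cA := max 1 (⨆ j : Fin (d₀ + 1), specNorm (pinv (A ((j : ℕ) + 1))))
  set cG := ⨅ k : Fin (d₀ + 2), tnorm (G k)
  have hcA : 1 ≤ cA := le_max_left _ _
  have hpinv (j : ℕ) (h1 : 1 ≤ j) (h2 : j ≤ d₀ + 1) : ‖pinv (A j)‖ ≤ cA :=
    (le_ciSup_fin_succ (fun j => specNorm (pinv (A j))) h1 h2).trans (le_max_right _ _)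
  obtain ⟨k₀, hk₀⟩ := exists_eq_ciInf_of_finite (f := fun k => tnorm (G k))
  have hcG : 0 < cG := (hGpos k₀).trans_eq hk₀
  have hcGk : cG ≤ tnorm (G k) := ciInf_le (Set.finite_range _).bddBelow k
  have hr (j : ℕ) (hj : j ≤ d₀ + 2) : 0 < r j := by
    rcases hj.lt_or_eq with hj | rfl
    exacts [pos_of_tnorm_pos (hGpos ⟨j, hj⟩), hrd ▸ Nat.one_pos]
  have hrR (j : ℕ) (hj : j ≤ d₀ + 1) : r (j + 1) ≤ R := by
    rcases hj.lt_or_eq with hj | rfl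
    · exact le_sup_fin_succ r (by omega) (by omega)
    · exact hrd.trans_le ((hr 1 (by omega)).trans_le (le_sup_fin_succ r le_rfl (by omega)))
  have hm (j : ℕ) (h1 : 1 ≤ j) (h2 : j ≤ d₀ + 1) : 0 < m j ∧ m j ≤ M :=
    ⟨(hr j (by omega)).trans_le (hArank j h1 h2 ▸ (A j).rank_le_height), le_sup_fin_succ m h1 h2⟩
  rw [div_le_iff₀ (hGpos k)]
  refine tnorm_le_of_forall (mul_pos hδ0 (hGpos k)).le fun x => ?_
  obtain ⟨_ | j, hk⟩ := k
  · obtain ⟨hm1, hm1M⟩ := hm 1 le_rfl (by omega)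
    refine l2_opNorm_le_of_abs_le_perturbationSize hcA hcG
      (Nat.mul_pos (hr 0 (by omega)) (hr 1 (by omega)))
      (two_mul_sqrt_mul_le_sqrt (N := N) (hr0.trans_le (hm1.trans_le hm1M)) (hrR 0 (by omega)))
      hcGk hδ0.le fun a α => ?_
    rw [of_apply, hGp1, hG1, add_sub_cancel_left]
    exact hΔB1 x α
  have hslice := fun B ΔB => l2_opNorm_sub_le_of_perturbed_solution (B := B) (ΔB := ΔB)
    (Y := of fun c α => Gp ⟨j + 1, hk⟩ c x α) hcA hcG
    (Nat.mul_pos (hm (j + 1) (by omega) (by omega)).1 (hr (j + 2) (by omega)))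
    (two_mul_sqrt_mul_le_sqrt (N := N) (hm (j + 1) (by omega) (by omega)).2
      (hrR (j + 1) (by omega)))
    hcGk (hArank (j + 1) (by omega) (by omega)) (hpinv (j + 1) (by omega) (by omega))
    (specNorm_le_tnorm _ x) hδ0.le hδ1.le (hΔA (j + 1) (by omega) (by omega))
  rcases Nat.lt_or_ge j d₀ with hjd | hjd
  · exact hslice _ _ (hΔBmid (j + 1) (by omega) (by omega) · x ·)
      (hGmid (j + 1) (by omega) (by omega) · x ·) (hGpmid (j + 1) (by omega) (by omega) · x ·)
  · obtain rfl : d₀ = j := by omega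
    exact hslice (fun β _ => Bd β x) (fun β _ => ΔBd β x) (fun β _ => hΔBd β x)
      (fun β α => hGlast β x α) (fun c α => hGplast c x α)
end

section
/- Let m ≥ 1 and let p be a discrete order-m Markov model on [n_1]×⋯×[n_d]. Then for any indices 1 ≤ i ≤ k and any j ≥ m with k + j ≤ d, the matrix p((x_i,…,x_k);(x_{k+1},…,x_{k+j})) (the marginal of p on the variables x_i,…,x_{k+j}, viewed as a matrix with rows indexed by (x_i,…,x_k) and columns by (x_{k+1},…,x_{k+j})) and the matrix p((x_i,…,x_k);(x_{k+1},…,x_{k+m})) (the marginal of p on the variables x_i,…,x_{k+m}, with rows indexed by (x_i,…,x_k) and columns by (x_{k+1},…,x_{k+m})) have the same column space. -/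
open scoped BigOperators
open Matrix

/-!
Write `M_j` for the marginal matrix with columns `[c, c + j)` and `P_W` for the marginal on a
window `W`. The Markov property at position `k = c + m` says that, given the variables in
`[c, k)`, those before `c` are independent of those from `k` on; summed over all other variables
this gives `M_j(x, y) · P_{[c,k)}(y|[c,k)) = M_m(x, y|[c,k)) · P_{[c,c+j)}(y)`. Hence every
column of `M_j` is a multiple of a column of `M_m`, or zero when `P_{[c,k)}(y|[c,k)) = 0`, since
`p ≥ 0`. Conversely, every column of `M_m` is a sum of columns of `M_j`, by marginalisation.
-/

section ColumnSpace

variable {R C C' : Type*}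

theorem colSpace_le_iff {A : Matrix R C ℝ} {B : Matrix R C' ℝ} :
    colSpace A ≤ colSpace B ↔ ∀ y, (fun r => A r y) ∈ colSpace B :=
  Submodule.span_le.trans Set.range_subset_iff

theorem colSpace_le_of_eq_sum_filter [Fintype C] [DecidableEq C'] {A : Matrix R C ℝ}
    {B : Matrix R C' ℝ} (φ : C → C') (h : ∀ r y', B r y' = ∑ y with φ y = y', A r y) :
    colSpace B ≤ colSpace A := by
  refine colSpace_le_iff.2 fun y' => ?_
  have hcol : (fun r => B r y') = ∑ y with φ y = y', fun r => A r y := by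
    ext r
    simp [h, Finset.sum_apply]
  rw [hcol]
  exact Submodule.sum_mem _ fun y _ => Submodule.subset_span ⟨y, rfl⟩

theorem colSpace_le_of_mul_eq_mul {A : Matrix R C ℝ} {B : Matrix R C' ℝ} (φ : C → C')
    (s t : C → ℝ) (h : ∀ r y, A r y * s y = B r (φ y) * t y)
    (h0 : ∀ y, s y = 0 → ∀ r, A r y = 0) :
    colSpace A ≤ colSpace B := by
  refine colSpace_le_iff.2 fun y => ?_
  by_cases hs : s y = 0
  · have hcol : (fun r => A r y) = 0 := funext (h0 y hs)
    rw [hcol]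
    exact Submodule.zero_mem _
  · have hcol : (fun r => A r y) = (t y / s y) • fun r => B r (φ y) := by
      ext r
      rw [Pi.smul_apply, smul_eq_mul, eq_comm, div_mul_eq_mul_div, div_eq_iff hs, h, mul_comm]
    rw [hcol]
    exact Submodule.smul_mem _ _ (Submodule.subset_span ⟨φ y, rfl⟩)

end ColumnSpace

section Windows

variable {n : ℕ → ℕ} {d : ℕ}

def restrictWindow (a b : ℕ) (w : PreIdx n d) : MidIdx n d a b := fun i => w i.1

def truncateWindow {c b b' : ℕ} (h : b' ≤ b) (y : MidIdx n d c b) : MidIdx n d c b' :=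
  fun i => y ⟨i.1, i.2.1, i.2.2.trans_le h⟩

def splice (k : ℕ) (u v : PreIdx n d) : PreIdx n d := fun i => if (i : ℕ) < k then u i else v i

theorem restrictWindow_eq_iff {a b : ℕ} {u w : PreIdx n d} :
    restrictWindow a b u = restrictWindow a b w ↔ ∀ i : Fin d, a ≤ i → i < b → u i = w i := by
  simp [restrictWindow, funext_iff]

theorem splice_eq_iff {k : ℕ} {u v w : PreIdx n d} :
    splice k u v = w ↔ (∀ i : Fin d, i < k → u i = w i) ∧ ∀ i : Fin d, k ≤ i → v i = w i := by
  simp only [splice, funext_iff]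
  refine ⟨fun h => ⟨fun i hi => ?_, fun i hi => ?_⟩, fun h i => ?_⟩
  · simpa [hi] using h i
  · simpa [not_lt.2 hi] using h i
  · split_ifs with hi
    exacts [h.1 i hi, h.2 i (not_lt.1 hi)]

theorem splice_eq_iff_restrictWindow {a c k b : ℕ} (hck : c ≤ k) (hkb : k ≤ b)
    {u v w : PreIdx n d} :
    ((restrictWindow a c u = restrictWindow a c w ∧
        restrictWindow c k u = restrictWindow c k w) ∧
      restrictWindow c b v = restrictWindow c b w) ∧ splice k u v = w ↔
    restrictWindow 0 k u = restrictWindow 0 k w ∧ restrictWindow c d v = restrictWindow c d w := by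
  simp only [restrictWindow_eq_iff, splice_eq_iff]
  constructor
  · rintro ⟨⟨-, hv⟩, hu, hv'⟩
    refine ⟨fun i _ hi => hu i hi, fun i hci _ => ?_⟩
    rcases lt_or_ge (i : ℕ) k with hik | hki
    · exact hv i hci (hik.trans_le hkb)
    · exact hv' i hki
  · rintro ⟨hu, hv⟩
    exact ⟨⟨⟨fun i _ hic => hu i (Nat.zero_le _) (hic.trans_le hck),
      fun i _ hik => hu i (Nat.zero_le _) hik⟩, fun i hci _ => hv i hci i.isLt⟩,
      fun i hik => hu i (Nat.zero_le _) hik, fun i hki => hv i (hck.trans hki) i.isLt⟩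

theorem winMarg_eq_sum_filter (p : PreIdx n d → ℝ) (a b : ℕ) (y : MidIdx n d a b) :
    winMarg p a b y = ∑ w with restrictWindow a b w = y, p w := by
  refine Finset.sum_nbij'
    (fun z i => if h : a ≤ (i : ℕ) ∧ (i : ℕ) < b then y ⟨i, h⟩ else z ⟨i, by omega⟩)
    (fun w i => w i.1) ?_ (fun _ _ => Finset.mem_univ _) ?_ ?_ (fun _ _ => rfl)
  · intro z _
    simp only [Finset.mem_filter, Finset.mem_univ, true_and]
    funext i
    exact dif_pos i.2
  · intro z _
    funext i
    exact dif_neg (by have := i.2; omega)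
  · intro w hw
    obtain rfl := (Finset.mem_filter.1 hw).2
    funext i
    split_ifs <;> rfl

theorem winMatrix_eq_sum_filter (p : PreIdx n d → ℝ) {a c b : ℕ} (hac : a ≤ c) (hcb : c ≤ b)
    (x : MidIdx n d a c) (y : MidIdx n d c b) :
    winMatrix p a c b x y =
      ∑ w with restrictWindow a c w = x ∧ restrictWindow c b w = y, p w := by
  refine Finset.sum_nbij'
    (fun z i => if h1 : a ≤ (i : ℕ) ∧ (i : ℕ) < c then x ⟨i, h1⟩
      else if h2 : c ≤ (i : ℕ) ∧ (i : ℕ) < b then y ⟨i, h2⟩ else z ⟨i, by omega⟩)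
    (fun w i => w i.1) ?_ (fun _ _ => Finset.mem_univ _) ?_ ?_ (fun _ _ => rfl)
  · intro z _
    simp only [Finset.mem_filter, Finset.mem_univ, true_and]
    constructor
    · funext i
      exact dif_pos i.2
    · funext i
      have := i.2
      exact (dif_neg (by omega)).trans (dif_pos i.2)
  · intro z _
    funext i
    have := i.2
    exact (dif_neg (by omega)).trans (dif_neg (by omega))
  · intro w hw
    obtain ⟨rfl, rfl⟩ := (Finset.mem_filter.1 hw).2
    funext i
    split_ifs <;> rfl

theorem winMatrix_nonneg (p : PreIdx n d → ℝ) (hp : ∀ w, 0 ≤ p w) (a c b : ℕ)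
    (x : MidIdx n d a c) (y : MidIdx n d c b) : 0 ≤ winMatrix p a c b x y :=
  Finset.sum_nonneg fun _ _ => hp _

theorem winMatrix_le_winMarg (p : PreIdx n d → ℝ) (hp : ∀ w, 0 ≤ p w) {a c b b' : ℕ}
    (hac : a ≤ c) (hcb : c ≤ b) (hbb' : b ≤ b') (x : MidIdx n d a c) (y : MidIdx n d c b') :
    winMatrix p a c b' x y ≤ winMarg p c b (truncateWindow hbb' y) := by
  rw [winMatrix_eq_sum_filter p hac (hcb.trans hbb'), winMarg_eq_sum_filter]
  refine Finset.sum_le_sum_of_subset_of_nonneg ?_ fun w _ _ => hp w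
  intro w
  simp only [Finset.mem_filter, Finset.mem_univ, true_and]
  rintro ⟨-, rfl⟩
  rfl

theorem winMatrix_eq_sum_truncateWindow (p : PreIdx n d → ℝ) {a c b b' : ℕ} (hac : a ≤ c)
    (hcb : c ≤ b) (hbb' : b ≤ b') (x : MidIdx n d a c) (y : MidIdx n d c b) :
    winMatrix p a c b x y = ∑ y' with truncateWindow hbb' y' = y, winMatrix p a c b' x y' := by
  rw [winMatrix_eq_sum_filter p hac hcb]
  simp only [winMatrix_eq_sum_filter p hac (hcb.trans hbb')]
  rw [← Finset.sum_fiberwise_of_maps_to (g := restrictWindow c b')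
    (t := {y' | truncateWindow hbb' y' = y})]
  · refine Finset.sum_congr rfl fun y' hy' => Finset.sum_congr ?_ fun _ _ => rfl
    obtain rfl := (Finset.mem_filter.1 hy').2
    ext w
    simp only [Finset.mem_filter, Finset.mem_univ, true_and]
    constructor
    · rintro ⟨⟨hx, -⟩, hy⟩
      exact ⟨hx, hy⟩
    · rintro ⟨hx, rfl⟩
      exact ⟨⟨hx, rfl⟩, rfl⟩
  · exact fun w hw => Finset.mem_filter.2 ⟨Finset.mem_univ _, (Finset.mem_filter.1 hw).2.2⟩

-- Both sides expand into sums over pairs `(u, v)`; `splice k` identifies these pairs with the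
-- full indices `w` of the left-hand side.
theorem sum_winMarg_mul_winMarg (p : PreIdx n d → ℝ) {a c k b : ℕ} (hac : a ≤ c) (hck : c ≤ k)
    (hkb : k ≤ b) (x : MidIdx n d a c) (y : MidIdx n d c b) :
    ∑ w with restrictWindow a c w = x ∧ restrictWindow c b w = y,
        winMarg p 0 k (restrictWindow 0 k w) * winMarg p c d (restrictWindow c d w) =
      winMatrix p a c k x (truncateWindow hkb y) * winMarg p c b y := by
  symm
  rw [winMatrix_eq_sum_filter p hac hck, winMarg_eq_sum_filter, Finset.sum_mul_sum,
    ← Finset.sum_product',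
    ← Finset.sum_fiberwise_of_maps_to (g := fun uv => splice k uv.1 uv.2)
      (t := {w | restrictWindow a c w = x ∧ restrictWindow c b w = y})]
  · refine Finset.sum_congr rfl fun w hw => ?_
    obtain ⟨rfl, rfl⟩ := (Finset.mem_filter.1 hw).2
    simp only [winMarg_eq_sum_filter, Finset.sum_mul_sum, ← Finset.sum_product']
    refine Finset.sum_congr ?_ fun _ _ => rfl
    ext ⟨u, v⟩
    simp only [Finset.mem_product, Finset.mem_filter, Finset.mem_univ, true_and]
    exact splice_eq_iff_restrictWindow hck hkb
  · rintro ⟨u, v⟩ huv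
    simp only [Finset.mem_product, Finset.mem_filter, Finset.mem_univ, true_and] at huv ⊢
    obtain ⟨⟨rfl, hu⟩, rfl⟩ := huv
    refine ⟨restrictWindow_eq_iff.2 fun i _ hic => if_pos (hic.trans_le hck),
      restrictWindow_eq_iff.2 fun i hci _ => ?_⟩
    unfold splice
    split_ifs with hik
    exacts [restrictWindow_eq_iff.1 hu i hci hik, rfl]

end Windows

theorem IsMarkovOrder.winMatrix_mul_winMarg {n : ℕ → ℕ} {d m : ℕ} {p : PreIdx n d → ℝ}
    (hp : IsMarkovOrder m p) {a c j : ℕ} (hac : a ≤ c) (hc : 0 < c) (hmj : m ≤ j)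
    (hmd : c + m < d) (x : MidIdx n d a c) (y : MidIdx n d c (c + j)) :
    winMatrix p a c (c + j) x y * winMarg p c (c + m) (truncateWindow (by omega) y) =
      winMatrix p a c (c + m) x (truncateWindow (by omega) y) * winMarg p c (c + j) y := by
  have hmarkov := hp.2.2 (c + m) (by omega) (by omega)
  rw [Nat.add_sub_cancel] at hmarkov
  calc winMatrix p a c (c + j) x y * winMarg p c (c + m) (truncateWindow (by omega) y)
      = ∑ w with restrictWindow a c w = x ∧ restrictWindow c (c + j) w = y,
          p w * winMarg p c (c + m) (restrictWindow c (c + m) w) := by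
        rw [winMatrix_eq_sum_filter p hac (by omega), Finset.sum_mul]
        refine Finset.sum_congr rfl fun w hw => ?_
        obtain ⟨-, rfl⟩ := (Finset.mem_filter.1 hw).2
        rfl
    _ = ∑ w with restrictWindow a c w = x ∧ restrictWindow c (c + j) w = y,
          winMarg p 0 (c + m) (restrictWindow 0 (c + m) w) *
            winMarg p c d (restrictWindow c d w) :=
        Finset.sum_congr rfl fun w _ => hmarkov w
    _ = _ := sum_winMarg_mul_winMarg p hac (Nat.le_add_right c m) (by omega) x y

-- 0-based indexing: the rows are the variables in `[a, c)` (so `a = i - 1`, `c = k`), the columns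
-- those in `[c, c + j)`.
theorem higher_order_markov_colSpace_eq_general
    (d m : ℕ) (n : ℕ → ℕ) (p : PreIdx n d → ℝ) (hp : IsMarkovOrder m p)
    (a c j : ℕ) (hac : a < c) (hj : m ≤ j) (hcd : c + j ≤ d) :
    colSpace (winMatrix p a c (c + j)) = colSpace (winMatrix p a c (c + m)) := by
  rcases hj.eq_or_lt with rfl | hmj
  · rfl
  have hle : c + m ≤ c + j := by omega
  have hzero : ∀ y, winMarg p c (c + m) (truncateWindow hle y) = 0 →
      ∀ x, winMatrix p a c (c + j) x y = 0 := fun y h0 x =>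
    le_antisymm (h0 ▸ winMatrix_le_winMarg p hp.1 hac.le (Nat.le_add_right c m) hle x y)
      (winMatrix_nonneg p hp.1 a c (c + j) x y)
  exact le_antisymm
    (colSpace_le_of_mul_eq_mul (truncateWindow hle) _ _
      (fun x y => hp.winMatrix_mul_winMarg hac.le (by omega) hj (by omega) x y) hzero)
    (colSpace_le_of_eq_sum_filter (truncateWindow hle)
      fun x y => winMatrix_eq_sum_truncateWindow p hac.le (by omega) hle x y)

/-- Lemma: column spaces for order-`m` Markov models.
For a discrete order-`m` Markov model `p` on `[n_1] × ⋯ × [n_d]`, any `1 ≤ i ≤ k`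
(1-based) and any `j ≥ m` with `k + j ≤ d`, the marginal matrix
`p((x_i,…,x_k); (x_{k+1},…,x_{k+j}))` and the marginal matrix
`p((x_i,…,x_k); (x_{k+1},…,x_{k+m}))` have the same column space.
(0-based encoding: rows are the variables in the window `[a, c)` with `a = i - 1`,
`c = k`, columns those in `[c, c + j)`; `1 ≤ i ≤ k` becomes `a < c`.) -/
theorem higher_order_markov_colSpace_eq
    (d m : ℕ) (hm : 1 ≤ m) (n : ℕ → ℕ) (p : PreIdx n d → ℝ) (hp : IsMarkovOrder m p)
    (a c j : ℕ) (hac : a < c) (hj : m ≤ j) (hcd : c + j ≤ d) :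
    colSpace (winMatrix p a c (c + j)) = colSpace (winMatrix p a c (c + m)) :=
  higher_order_markov_colSpace_eq_general d m n p hp a c j hac hj hcd
end
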